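/- arXiv:math/0402436 — 6 statements merged into one kernel-verified Lean document; each statement's English description precedes it below -/
import Mathlib

section
/- Let G be a subgroup of the symmetric group S₄ on {1,2,3,4} that acts transitively on {1,2,3,4} and is generated by a set of 3-cycles. Then G is equal to the alternating group A₄. -/
/-!
A group generated by 3-cycles consists of even permutations, so `G ≤ A₄`. A generating 3-cycle
gives `3 ∣ |G|`, and transitivity on four points gives `4 ∣ |G|` by orbit–stabilizer. Hence
`12 = |A₄|` divides `|G|`, forcing `G = A₄`.
-/

open Equiv Subgroup MulAction

theorem MulAction.natCard_dvd_natCard_of_isPretransitive (G X : Type*) [Group G] [MulAction G X]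
    [IsPretransitive G X] [Nonempty X] : Nat.card X ∣ Nat.card G := by
  obtain ⟨x⟩ := ‹Nonempty X›
  rw [← index_stabilizer_of_transitive G x]
  exact index_dvd_card _

theorem Equiv.Perm.closure_le_alternatingGroup {α : Type*} [Fintype α] [DecidableEq α]
    {S : Set (Perm α)} (hS : ∀ g ∈ S, g.IsThreeCycle) : closure S ≤ alternatingGroup α :=
  (closure_le _).mpr fun g hg ↦ (hS g hg).mem_alternatingGroup

theorem stmt8 (G : Subgroup (Equiv.Perm (Fin 4)))
    (htrans : ∀ x y : Fin 4, ∃ g ∈ G, g x = y)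
    (hgen : ∃ S : Set (Equiv.Perm (Fin 4)),
      (∀ g ∈ S, Equiv.Perm.IsThreeCycle g) ∧ G = Subgroup.closure S) :
    G = alternatingGroup (Fin 4) := by
  obtain ⟨S, hS, rfl⟩ := hgen
  have : IsPretransitive (closure S) (Fin 4) :=
    ⟨fun x y ↦ let ⟨g, hg, hgx⟩ := htrans x y; ⟨⟨g, hg⟩, hgx⟩⟩
  have h4 : 4 ∣ Nat.card (closure S) := by
    simpa using natCard_dvd_natCard_of_isPretransitive (closure S) (Fin 4)
  obtain ⟨g, hg⟩ : S.Nonempty := by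
    rw [Set.nonempty_iff_ne_empty]
    rintro rfl
    simp at h4
  have h3 : 3 ∣ Nat.card (closure S) :=
    (hS g hg).orderOf ▸ (closure S).orderOf_dvd_natCard (subset_closure hg)
  have h12 : Nat.card (alternatingGroup (Fin 4)) ∣ Nat.card (closure S) := by
    rw [nat_card_alternatingGroup, Nat.card_fin]
    show 4 * 3 ∣ _
    exact Nat.Coprime.mul_dvd_of_dvd_of_dvd (by norm_num) h4 h3
  exact eq_of_le_of_card_ge (Perm.closure_le_alternatingGroup hS) (Nat.le_of_dvd Nat.card_pos h12)
end

section
/- The five permutations (1,2)(3,4), (3,6)(4,5), (2,6)(3,4), (2,6)(3,5), (1,2)(4,6) of {1,...,6} generate the alternating group A₆. -/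
/-!
Points are labelled `0, …, 5` as in `Fin 6`. Every generator is a product of two transpositions,
so the group `G` they generate lies in `A₆`. Conversely, `G` contains the 3-cycle
`(0 1)(2 3) · (1 5)(2 3) = (0 1 5)` and the 5-cycle `(2 5)(3 4) · (1 5)(2 4) = (1 2 3 4 5)` fixing
`0`, while `(0 1)(2 3)` moves `0`. A block containing `0` is stable under the 5-cycle, so it is
`{0}` or everything; hence `G` is primitive, and by Jordan's theorem a primitive group containing
a 3-cycle contains `A₆`.
-/

open Equiv Equiv.Perm MulAction
open scoped Pointwise

theorem Equiv.Perm.isPreprimitive_of_isCycle_mem_of_support_eq_compl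
    {α : Type*} [Fintype α] [DecidableEq α] {G : Subgroup (Perm α)} {g : Perm α} {a : α}
    (hgc : g.IsCycle) (hsupp : g.support = {a}ᶜ) (hg : g ∈ G) (ha : a ∉ fixedPoints G α) :
    IsPreprimitive G α := by
  have hmoved : ∀ {x}, x ≠ a → g x ≠ x := fun hx ↦ by
    rwa [← mem_support, hsupp, Finset.mem_compl, Finset.mem_singleton]
  refine .of_isTrivialBlock_of_notMem_fixedPoints ha fun B haB hB ↦ ?_
  by_cases hBa : B ⊆ {a}
  · exact .inl (Set.subsingleton_singleton.anti hBa)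
  obtain ⟨b, hbB, hba⟩ := Set.not_subset.mp hBa
  refine .inr (Set.eq_univ_of_forall fun c ↦ ?_)
  obtain rfl | hca := eq_or_ne c a
  · exact haB
  obtain ⟨k, rfl⟩ := hgc.exists_pow_eq (hmoved hba) (hmoved hca)
  have hfix : (⟨g, hg⟩ ^ k : G) • a = a :=
    pow_apply_eq_self_of_apply_eq_self (notMem_support.mp (by simp [hsupp])) k
  have hgk : (⟨g, hg⟩ ^ k : G) • B = B := hB.smul_eq_of_mem haB (by rwa [hfix])
  rw [← hgk]
  exact Set.smul_mem_smul_set hbB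

theorem stmt9 :
    Subgroup.closure
      ({Equiv.swap 0 1 * Equiv.swap 2 3,
        Equiv.swap 2 5 * Equiv.swap 3 4,
        Equiv.swap 1 5 * Equiv.swap 2 3,
        Equiv.swap 1 5 * Equiv.swap 2 4,
        Equiv.swap 0 1 * Equiv.swap 3 5} : Set (Equiv.Perm (Fin 6))) =
      alternatingGroup (Fin 6) := by
  set S : Set (Perm (Fin 6)) := {swap 0 1 * swap 2 3, swap 2 5 * swap 3 4,
    swap 1 5 * swap 2 3, swap 1 5 * swap 2 4, swap 0 1 * swap 3 5}
  have hmem {σ : Perm (Fin 6)} (hσ : σ ∈ S) : σ ∈ Subgroup.closure S :=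
    Subgroup.subset_closure hσ
  have hthree : swap 1 0 * swap 1 5 ∈ Subgroup.closure S := by
    have h : swap 0 1 * swap 2 3 * (swap 1 5 * swap 2 3) =
        (swap 1 0 * swap 1 5 : Perm (Fin 6)) := by
      decide
    exact h ▸ mul_mem (hmem (by simp [S])) (hmem (by simp [S]))
  have hfive : ([1, 2, 3, 4, 5] : List (Fin 6)).formPerm ∈ Subgroup.closure S := by
    have h : swap 2 5 * swap 3 4 * (swap 1 5 * swap 2 4) =
        ([1, 2, 3, 4, 5] : List (Fin 6)).formPerm := by
      decide
    exact h ▸ mul_mem (hmem (by simp [S])) (hmem (by simp [S]))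
  have hsupp : ([1, 2, 3, 4, 5] : List (Fin 6)).formPerm.support = {0}ᶜ := by
    rw [List.support_formPerm_of_nodup _ (by decide) (by simp)]
    decide
  have hmoves : (0 : Fin 6) ∉ fixedPoints (Subgroup.closure S) (Fin 6) := fun h0 ↦
    absurd (h0 ⟨swap 0 1 * swap 2 3, hmem (by simp [S])⟩) (by rw [Subgroup.mk_smul]; decide)
  have hprim : IsPreprimitive (Subgroup.closure S) (Fin 6) :=
    isPreprimitive_of_isCycle_mem_of_support_eq_compl
      (List.isCycle_formPerm (by decide) (by decide)) hsupp hfive hmoves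
  refine le_antisymm ((Subgroup.closure_le _).mpr ?_) <|
    alternatingGroup_le_of_isPreprimitive_of_isThreeCycle_mem hprim
      (isThreeCycle_swap_mul_swap_same (by decide) (by decide) (by decide)) hthree
  rintro σ (rfl | rfl | rfl | rfl | rfl) <;>
    exact mul_mem_alternatingGroup_of_isSwap ⟨_, _, by decide, rfl⟩ ⟨_, _, by decide, rfl⟩
end

section
/- Let G be a subgroup of the alternating group A₆ on {1,...,6} that acts transitively on the 6 points and contains an element of order 5. Then G is either equal to A₆ or is isomorphic (as an abstract group) to the alternating group A₅. -/
set_option maxRecDepth 4000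
open Equiv Equiv.Perm Subgroup MulAction
namespace Stmt12Aux
instance : Fact (Nat.Prime 5) := ⟨by norm_num⟩


/-- permCongr as a MonoidHom -/
def permCongrHom {α β : Type*} (e : α ≃ β) : Perm α →* Perm β where
  toFun σ := e.permCongr σ
  map_one' := by ext x; simp
  map_mul' σ τ := by ext x; simp

lemma permCongrHom_injective {α β : Type*} (e : α ≃ β) :
    Function.Injective (permCongrHom e) := by
  intro σ τ h
  ext x
  have := congrArg (fun p => e.symm (p (e x))) h
  simpa [permCongrHom] using this

def e5 : Fin 5 ≃ {x : Fin 6 // x ≠ 5} where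
  toFun i := ⟨⟨i.1, by omega⟩, by
    intro h
    have : (⟨i.1, by omega⟩ : Fin 6).val = (5 : Fin 6).val := by rw [h]
    simp at this; omega⟩
  invFun x := ⟨x.1.1, by
    have h2 : x.1.val ≠ (5 : Fin 6).val := fun h => x.2 (Fin.ext h)
    have : (5 : Fin 6).val = 5 := rfl
    have := x.1.2
    omega⟩
  left_inv i := rfl
  right_inv x := rfl

def Φ : Perm (Fin 5) →* Perm (Fin 6) :=
  (Equiv.Perm.ofSubtype).comp (permCongrHom e5)

lemma Φ_sign (σ : Perm (Fin 5)) : sign (Φ σ) = sign σ := by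
  simp [Φ, permCongrHom, sign_ofSubtype, sign_permCongr]

lemma Φ_fix (σ : Perm (Fin 5)) : Φ σ 5 = 5 :=
  ofSubtype_apply_of_not_mem _ (by simp)

lemma ofSubtype_inj {α : Type*} [DecidableEq α] {p : α → Prop} [DecidablePred p] :
    Function.Injective (ofSubtype : Perm (Subtype p) →* Perm α) := by
  intro f g h
  ext x
  have := congrArg (fun q => q (x : α)) h
  simpa [ofSubtype_apply_of_mem (ha := x.2), Subtype.ext_iff] using this

lemma Φ_injective : Function.Injective Φ :=
  ofSubtype_inj.comp (permCongrHom_injective e5)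


def K5 : Subgroup (Perm (Fin 6)) :=
  alternatingGroup (Fin 6) ⊓ MulAction.stabilizer (Perm (Fin 6)) (5 : Fin 6)

def ψ : alternatingGroup (Fin 5) →* K5 where
  toFun σ := ⟨Φ σ.1, by
    rw [K5, Subgroup.mem_inf]
    constructor
    · rw [mem_alternatingGroup, Φ_sign]
      exact mem_alternatingGroup.1 σ.2
    · rw [mem_stabilizer_iff]
      show Φ σ.1 • (5 : Fin 6) = 5
      rw [Perm.smul_def, Φ_fix]⟩
  map_one' := by ext : 1; simp
  map_mul' σ τ := by ext : 1; simp

lemma ψ_bijective : Function.Bijective ψ := by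
  constructor
  · intro σ τ h
    have : Φ σ.1 = Φ τ.1 := congrArg Subtype.val h
    exact Subtype.ext (Φ_injective this)
  · rintro ⟨τ, hmem⟩
    rw [K5, Subgroup.mem_inf] at hmem
    obtain ⟨hτ, hτ5⟩ := hmem
    rw [mem_stabilizer_iff, Perm.smul_def] at hτ5
    have h₁ : ∀ x : Fin 6, x ≠ 5 ↔ τ x ≠ 5 := by
      intro x
      constructor
      · intro hx h
        exact hx (τ.injective (h.trans hτ5.symm))
      · intro hx h
        exact hx (by rw [h, hτ5])
    set στ : Perm {x : Fin 6 // x ≠ 5} := τ.subtypePerm (fun x => (h₁ x).symm) with hστ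
    have hofs : ofSubtype στ = τ := by
      apply ofSubtype_subtypePerm
      intro x hx h5
      exact hx (by rw [h5, hτ5])
    set σ : Perm (Fin 5) := (e5.symm).permCongr στ with hσ
    have hΦσ : Φ σ = τ := by
      rw [← hofs]
      show ofSubtype (e5.permCongr ((e5.symm).permCongr στ)) = ofSubtype στ
      have h : e5.permCongr ((e5.symm).permCongr στ) = στ := by
        ext x; simp
      rw [h]
    have hσA : σ ∈ alternatingGroup (Fin 5) := by
      rw [mem_alternatingGroup, ← Φ_sign, hΦσ]
      exact mem_alternatingGroup.1 hτ
    exact ⟨⟨σ, hσA⟩, Subtype.ext hΦσ⟩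

noncomputable def stabIso : K5 ≃* alternatingGroup (Fin 5) :=
  (MulEquiv.ofBijective ψ ψ_bijective).symm




def pσ₁ : Perm (Fin 6) := ⟨![0,2,3,4,5,1], ![0,5,1,2,3,4], by decide, by decide⟩
def pσ₂ : Perm (Fin 6) := ⟨![0,2,5,1,3,4], ![0,3,1,4,5,2], by decide, by decide⟩
def pg₀ : Perm (Fin 6) := (swap 0 1 * swap 1 2) * (swap 3 4 * swap 4 5)
def pb₀ : Perm (Fin 6):= ⟨![3,4,5,0,1,2], ![3,4,5,0,1,2], by decide, by decide⟩
def pc₁ : Perm (Fin 6) := ⟨![0,1,3,2,5,4], ![0,1,3,2,5,4], by decide, by decide⟩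

lemma pg₀_cycleType : cycleType pg₀ = {3, 3} := by
  have h1 : IsThreeCycle ((swap 0 1 * swap 1 2 : Perm (Fin 6))) := by
    rw [← card_support_eq_three_iff]; decide
  have h2 : IsThreeCycle ((swap 3 4 * swap 4 5 : Perm (Fin 6))) := by
    rw [← card_support_eq_three_iff]; decide
  have hd : (swap 0 1 * swap 1 2 : Perm (Fin 6)).Disjoint (swap 3 4 * swap 4 5) := by
    intro x; fin_cases x <;> decide
  rw [pg₀, Equiv.Perm.Disjoint.cycleType_mul hd, h1.cycleType, h2.cycleType]
  rfl

lemma normalFive (N : Subgroup (alternatingGroup (Fin 6))) (hN : N.Normal)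
    (h : ∀ x : alternatingGroup (Fin 6), orderOf x = 5 → x ∈ N) : N = ⊤ := by
  haveI := hN
  have hm1 : pσ₁ ∈ alternatingGroup (Fin 6) := by rw [mem_alternatingGroup]; decide
  have hm2 : pσ₂ ∈ alternatingGroup (Fin 6) := by rw [mem_alternatingGroup]; decide
  have ho1 : orderOf (⟨pσ₁, hm1⟩ : alternatingGroup (Fin 6)) = 5 := by
    rw [← Subgroup.orderOf_coe]
    show orderOf pσ₁ = 5
    exact orderOf_eq_prime (p := 5) (by decide) (by decide)
  have ho2 : orderOf (⟨pσ₂, hm2⟩ : alternatingGroup (Fin 6)) = 5 := by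
    rw [← Subgroup.orderOf_coe]
    show orderOf pσ₂ = 5
    exact orderOf_eq_prime (p := 5) (by decide) (by decide)
  have ht : IsThreeCycle (pσ₁ * pσ₂) := by rw [← card_support_eq_three_iff]; decide
  have hmem : (⟨pσ₁ * pσ₂, ht.mem_alternatingGroup⟩ : alternatingGroup (Fin 6)) ∈ N :=
    N.mul_mem (h _ ho1) (h _ ho2)
  rw [eq_top_iff, ← ht.alternating_normalClosure (by simp)]
  exact normalClosure_le_normal (Set.singleton_subset_iff.2 hmem)



lemma support_card_le (σ : Perm (Fin 6)) : σ.support.card ≤ 6 := by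
  simpa using Finset.card_le_univ σ.support

lemma exists_fixed_of_support_ne (σ : Perm (Fin 6)) (h : σ.support.card ≠ 6) :
    ∃ a, σ a = a := by
  by_contra hc
  push_neg at hc
  have : σ.support = Finset.univ := Finset.eq_univ_iff_forall.2 fun a => mem_support.2 (hc a)
  rw [this] at h
  simp at h

lemma invol_fixed (σ : Perm (Fin 6)) (hs : sign σ = 1) (ho : orderOf σ = 2) :
    ∃ a, σ a = a := by
  have hparts : ∀ n ∈ σ.cycleType, n = 2 := by
    intro n hn
    have h1 : n ∣ 2 := by
      rw [← ho, ← σ.lcm_cycleType]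
      exact Multiset.dvd_lcm hn
    have h2 := two_le_of_mem_cycleType hn
    have h3 : n ≤ 2 := Nat.le_of_dvd (by norm_num) h1
    omega
  have hsum : σ.cycleType.sum = 2 * Multiset.card σ.cycleType := by
    rw [Multiset.eq_replicate_card.2 hparts]
    simp [Multiset.sum_replicate, mul_comm]
  have hsign := σ.sign_of_cycleType
  rw [hs, hsum] at hsign
  have hcards : σ.support.card = 2 * Multiset.card σ.cycleType := by
    rw [← σ.sum_cycleType, hsum]
  set c := Multiset.card σ.cycleType with hc
  have hceven : Even c := by
    by_contra hodd
    rw [Nat.not_even_iff_odd] at hodd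
    rw [pow_add, pow_mul] at hsign
    simp [hodd.neg_one_pow] at hsign
  have hne : σ ≠ 1 := by
    intro h1
    rw [h1] at ho
    simp at ho
  have hc0 : c ≠ 0 := by
    rw [hc, Ne, Multiset.card_eq_zero, cycleType_eq_zero]
    exact hne
  have hle : 2 * c ≤ 6 := hcards ▸ support_card_le σ
  have : c = 2 := by
    obtain ⟨k, hk⟩ := hceven
    omega
  apply exists_fixed_of_support_ne
  omega

lemma order5_fixed (σ : Perm (Fin 6)) (ho : orderOf σ = 5) : ∃ a, σ a = a := by
  have hparts : ∀ n ∈ σ.cycleType, n = 5 := by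
    intro n hn
    have h1 : n ∣ 5 := by
      rw [← ho, ← σ.lcm_cycleType]
      exact Multiset.dvd_lcm hn
    have h2 := two_le_of_mem_cycleType hn
    have h3 : n ≤ 5 := Nat.le_of_dvd (by norm_num) h1
    interval_cases n <;> revert h1 <;> decide
  have hsum : σ.cycleType.sum = 5 * Multiset.card σ.cycleType := by
    rw [Multiset.eq_replicate_card.2 hparts]
    simp [Multiset.sum_replicate, mul_comm]
  have hcards : σ.support.card = 5 * Multiset.card σ.cycleType := by
    rw [← σ.sum_cycleType, hsum]
  have hle := support_card_le σ
  apply exists_fixed_of_support_ne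
  omega

lemma no_order9 (σ : Perm (Fin 6)) : orderOf σ ≠ 9 := by
  intro ho
  have hdvd : σ.cycleType.lcm ∣ 3 := by
    apply Multiset.lcm_dvd.2
    intro n hn
    have h1 : n ∣ 9 := by
      rw [← ho, ← σ.lcm_cycleType]
      exact Multiset.dvd_lcm hn
    have h2 := two_le_of_mem_cycleType hn
    have h3 : n ≤ σ.cycleType.sum := Multiset.le_sum_of_mem hn
    rw [σ.sum_cycleType] at h3
    have h4 : n ≤ 6 := h3.trans (support_card_le σ)
    interval_cases n <;> revert h1 <;> decide
  rw [σ.lcm_cycleType, ho] at hdvd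
  omega


abbrev A6 := alternatingGroup (Fin 6)

lemma st_eq : stabilizer A6 (5 : Fin 6) = K5.subgroupOf A6 := by
  ext x
  rw [mem_stabilizer_iff, mem_subgroupOf, K5, Subgroup.mem_inf, mem_stabilizer_iff]
  simp only [x.2, true_and]
  rfl

noncomputable def stIso : stabilizer A6 (5 : Fin 6) ≃* alternatingGroup (Fin 5) :=
  ((MulEquiv.subgroupCongr st_eq).trans
    (Subgroup.subgroupOfEquivOfLe inf_le_left)).trans stabIso

/-- every point can be moved to 5 by an even permutation -/
lemma exists_even_move (a : Fin 6) : ∃ c : Perm (Fin 6), sign c = 1 ∧ c a = 5 := by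
  fin_cases a
  · exact ⟨swap 0 5 * swap 1 2, by decide, by decide⟩
  · exact ⟨swap 1 5 * swap 0 2, by decide, by decide⟩
  · exact ⟨swap 2 5 * swap 0 1, by decide, by decide⟩
  · exact ⟨swap 3 5 * swap 0 1, by decide, by decide⟩
  · exact ⟨swap 4 5 * swap 0 1, by decide, by decide⟩
  · exact ⟨1, by decide, by decide⟩

theorem A6_simple (N : Subgroup A6) (hN : N.Normal) : N = ⊥ ∨ N = ⊤ := by
  haveI := hN
  by_cases hbot : N = ⊥
  · exact Or.inl hbot
  right
  have hex : ∃ x : A6, x ∈ N ∧ x ≠ 1 := by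
    by_contra hc
    push_neg at hc
    exact hbot ((Subgroup.eq_bot_iff_forall N).2 hc)
  by_cases hfix : ∃ x : A6, x ∈ N ∧ x ≠ 1 ∧ ∃ a, (x : Perm (Fin 6)) a = a
  · -- Case A : some nonidentity element of N has a fixed point
    obtain ⟨x, hxN, hx1, a, ha⟩ := hfix
    obtain ⟨c, hcsign, hca⟩ := exists_even_move a
    have hcA : c ∈ A6 := mem_alternatingGroup.2 hcsign
    set y : A6 := ⟨c, hcA⟩ * x * (⟨c, hcA⟩)⁻¹ with hy
    have hyN : y ∈ N := hN.conj_mem x hxN ⟨c, hcA⟩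
    have hy1 : y ≠ 1 := by
      intro h
      apply hx1
      have := congrArg (fun z => (⟨c, hcA⟩)⁻¹ * z * ⟨c, hcA⟩) h
      simpa [hy, mul_assoc] using this
    have hyfix : (y : Perm (Fin 6)) 5 = 5 := by
      have h5 : c⁻¹ 5 = a := by rw [← hca]; simp
      show (c * (x : Perm (Fin 6)) * c⁻¹) 5 = 5
      rw [Perm.mul_apply, Perm.mul_apply, h5, ha, hca]
    -- use simplicity of A5 via the stabilizer
    set St := stabilizer A6 (5 : Fin 6) with hSt
    have hySt : y ∈ St := by
      rw [hSt, mem_stabilizer_iff]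
      exact hyfix
    set N' := N.subgroupOf St with hN'
    haveI hN'n : N'.Normal := hN.subgroupOf St
    set M := N'.map stIso.toMonoidHom with hM
    haveI hMn : M.Normal := hN'n.map _ (MulEquiv.surjective stIso)
    rcases hMn.eq_bot_or_eq_top with hMb | hMt
    · exfalso
      have : (⟨y, hySt⟩ : St) ∈ N' := by
        rw [hN', mem_subgroupOf]
        exact hyN
      have h2 : stIso ⟨y, hySt⟩ ∈ M := ⟨_, this, rfl⟩
      rw [hMb, Subgroup.mem_bot] at h2
      have : (⟨y, hySt⟩ : St) = 1 := (MulEquiv.map_eq_one_iff stIso).1 h2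
      rw [Subtype.ext_iff, OneMemClass.coe_one] at this
      exact hy1 this
    · -- N' = ⊤, so St ≤ N
      have hN't : N' = ⊤ := by
        have h1 : N'.map stIso.toMonoidHom = Subgroup.map stIso.toMonoidHom ⊤ := by
          rw [Subgroup.map_top_of_surjective _ (MulEquiv.surjective stIso), ← hM]
          exact hMt
        exact Subgroup.map_injective (MulEquiv.injective stIso) h1
      have hStN : St ≤ N := by
        rw [hN', Subgroup.subgroupOf_eq_top] at hN't
        exact hN't
      -- a three-cycle fixing 5 lies in N
      have ht : IsThreeCycle ((swap 0 1 * swap 1 2 : Perm (Fin 6))) := by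
        rw [← card_support_eq_three_iff]; decide
      have htSt : (⟨_, ht.mem_alternatingGroup⟩ : A6) ∈ St := by
        rw [hSt, mem_stabilizer_iff]
        show (swap 0 1 * swap 1 2 : Perm (Fin 6)) 5 = 5
        decide
      have htN : (⟨_, ht.mem_alternatingGroup⟩ : A6) ∈ N := hStN htSt
      rw [eq_top_iff, ← ht.alternating_normalClosure (by simp)]
      exact normalClosure_le_normal (Set.singleton_subset_iff.2 htN)
  · -- Case B : every nonidentity element of N is fixed-point-free; contradiction
    exfalso
    push_neg at hfix
    obtain ⟨x₀, hx₀N, hx₀1⟩ := hex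
    -- all prime divisors of orders in N are 3
    have hpd : ∀ x : A6, x ∈ N → x ≠ 1 → ∀ p : ℕ, p.Prime → p ∣ orderOf (x : Perm (Fin 6)) → p = 3 := by
      intro x hxN hx1 p hp hpdvd
      set o := orderOf (x : Perm (Fin 6)) with hodef
      set z : A6 := x ^ (o / p) with hz
      have hzcoe : (z : Perm (Fin 6)) = (x : Perm (Fin 6)) ^ (o / p) := rfl
      have hozp : orderOf (z : Perm (Fin 6)) = p := by
        rw [hzcoe, orderOf_pow, ← hodef, Nat.gcd_eq_right (Nat.div_dvd_of_dvd hpdvd),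
          Nat.div_div_self hpdvd]
        have : o ≠ 0 := by
          rw [hodef]
          exact orderOf_pos _ |>.ne'
        exact this
      have hz1 : z ≠ 1 := by
        intro h
        rw [h] at hozp
        simp at hozp
        exact hp.ne_one hozp.symm
      have hzN : z ∈ N := N.pow_mem hxN _
      have hzfpf := hfix z hzN hz1
      have hzsign : sign (z : Perm (Fin 6)) = 1 := mem_alternatingGroup.1 z.2
      by_contra hp3
      -- p ∈ {2, 5} leads to fixed point; otherwise p ≤ 6 via cycle parts
      have hct : (z : Perm (Fin 6)).cycleType ≠ 0 := by
        rw [Ne, cycleType_eq_zero]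
        intro h
        rw [h] at hozp
        simp at hozp
        exact hp.ne_one hozp.symm
      obtain ⟨n, hn⟩ := Multiset.exists_mem_of_ne_zero hct
      have hn2 := two_le_of_mem_cycleType hn
      have hndvd : n ∣ p := by
        rw [← hozp, ← lcm_cycleType]
        exact Multiset.dvd_lcm hn
      have hnp : n = p := ((Nat.Prime.eq_one_or_self_of_dvd hp n hndvd).resolve_left (by omega))
      have hn6 : n ≤ 6 := by
        have h3 : n ≤ (z : Perm (Fin 6)).cycleType.sum := Multiset.le_sum_of_mem hn
        rw [sum_cycleType] at h3
        exact h3.trans (support_card_le _)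
      have hp6 : p ≤ 6 := hnp ▸ hn6
      have hp2 := hp.two_le
      interval_cases p
      · obtain ⟨a, ha⟩ := invol_fixed _ hzsign hozp
        exact hzfpf a ha
      · exact hp3 rfl
      · revert hp; decide
      · obtain ⟨a, ha⟩ := order5_fixed _ hozp
        exact hzfpf a ha
      · revert hp; decide
    -- cycleType of x₀ is {3, 3}
    have hparts3 : ∀ n ∈ (x₀ : Perm (Fin 6)).cycleType, n = 3 := by
      intro n hn
      have hn2 := two_le_of_mem_cycleType hn
      have hn6 : n ≤ 6 := by
        have h3 : n ≤ (x₀ : Perm (Fin 6)).cycleType.sum := Multiset.le_sum_of_mem hn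
        rw [sum_cycleType] at h3
        exact h3.trans (support_card_le _)
      have hndvd : n ∣ orderOf (x₀ : Perm (Fin 6)) := by
        rw [← lcm_cycleType]
        exact Multiset.dvd_lcm hn
      interval_cases n
      · exact absurd (hpd x₀ hx₀N hx₀1 2 (by norm_num) hndvd) (by norm_num)
      · rfl
      · exact absurd (hpd x₀ hx₀N hx₀1 2 (by norm_num) (dvd_trans ⟨2, rfl⟩ hndvd)) (by norm_num)
      · exact absurd (hpd x₀ hx₀N hx₀1 5 (by norm_num) hndvd) (by norm_num)
      · exact absurd (hpd x₀ hx₀N hx₀1 2 (by norm_num) (dvd_trans ⟨3, rfl⟩ hndvd)) (by norm_num)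
    have hsum6 : (x₀ : Perm (Fin 6)).cycleType.sum = 6 := by
      rw [sum_cycleType]
      have : (x₀ : Perm (Fin 6)).support = Finset.univ :=
        Finset.eq_univ_iff_forall.2 fun a => mem_support.2 (hfix x₀ hx₀N hx₀1 a)
      rw [this]
      simp
    have hct33 : (x₀ : Perm (Fin 6)).cycleType = {3, 3} := by
      have hrep := Multiset.eq_replicate_card.2 hparts3
      have hcard : Multiset.card (x₀ : Perm (Fin 6)).cycleType = 2 := by
        have := hsum6
        rw [hrep] at this
        rw [Multiset.sum_replicate, smul_eq_mul] at this
        omega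
      rw [hrep, hcard]
      rfl
    -- conjugate x₀ to pg₀ by an even permutation
    have hconj : IsConj (x₀ : Perm (Fin 6)) pg₀ :=
      isConj_iff_cycleType_eq.2 (hct33.trans pg₀_cycleType.symm)
    obtain ⟨c, hc⟩ := isConj_iff.1 hconj
    have hd : ∃ d : Perm (Fin 6), sign d = 1 ∧ d * (x₀ : Perm (Fin 6)) * d⁻¹ = pg₀ := by
      rcases Int.units_eq_one_or (sign c) with hsc | hsc
      · exact ⟨c, hsc, hc⟩
      · refine ⟨pb₀ * c, ?_, ?_⟩
        · rw [map_mul, hsc]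
          decide
        · have h2 : pb₀ * c * (x₀ : Perm (Fin 6)) * (pb₀ * c)⁻¹ =
              pb₀ * (c * (x₀ : Perm (Fin 6)) * c⁻¹) * pb₀⁻¹ := by group
          rw [h2, hc]
          decide
    obtain ⟨d, hdsign, hdconj⟩ := hd
    have hdA : d ∈ A6 := mem_alternatingGroup.2 hdsign
    have hg₀A : pg₀ ∈ A6 := by rw [mem_alternatingGroup]; decide
    have hx₁N : (⟨pg₀, hg₀A⟩ : A6) ∈ N := by
      have hconjmem := hN.conj_mem x₀ hx₀N ⟨d, hdA⟩
      have : (⟨d, hdA⟩ : A6) * x₀ * (⟨d, hdA⟩)⁻¹ = ⟨pg₀, hg₀A⟩ := by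
        apply Subtype.ext
        exact hdconj
      rwa [this] at hconjmem
    have hc₁A : pc₁ ∈ A6 := by rw [mem_alternatingGroup]; decide
    have hx₂N : (⟨pc₁, hc₁A⟩ : A6) * ⟨pg₀, hg₀A⟩ * (⟨pc₁, hc₁A⟩)⁻¹ ∈ N :=
      hN.conj_mem _ hx₁N _
    have hprodN : ((⟨pc₁, hc₁A⟩ : A6) * ⟨pg₀, hg₀A⟩ * (⟨pc₁, hc₁A⟩)⁻¹) * ⟨pg₀, hg₀A⟩ ∈ N :=
      N.mul_mem hx₂N hx₁N
    set w := ((⟨pc₁, hc₁A⟩ : A6) * ⟨pg₀, hg₀A⟩ * (⟨pc₁, hc₁A⟩)⁻¹) * ⟨pg₀, hg₀A⟩ with hw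
    have hwcoe : (w : Perm (Fin 6)) = pc₁ * pg₀ * pc₁⁻¹ * pg₀ := rfl
    have hw1 : w ≠ 1 := by
      intro h
      have : (w : Perm (Fin 6)) = 1 := by rw [h]; rfl
      rw [hwcoe] at this
      revert this
      decide
    have hwfix : (w : Perm (Fin 6)) 4 = 4 := by
      rw [hwcoe]
      decide
    exact hfix w hprodN hw1 4 hwfix



lemma card_alt6 : Nat.card (alternatingGroup (Fin 6)) = 360 := by
  rw [Nat.card_eq_fintype_card]
  have h := two_mul_card_alternatingGroup (α := Fin 6)
  rw [Fintype.card_perm, Fintype.card_fin] at h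
  have h720 : Nat.factorial 6 = 720 := rfl
  omega

end Stmt12Aux

open Stmt12Aux in
theorem stmt12 (G : Subgroup (Equiv.Perm (Fin 6)))
    (hle : G ≤ alternatingGroup (Fin 6))
    (htrans : ∀ x y : Fin 6, ∃ g ∈ G, g x = y)
    (h5 : ∃ g ∈ G, orderOf g = 5) :
    G = alternatingGroup (Fin 6) ∨ Nonempty (G ≃* alternatingGroup (Fin 5)) := by
  classical
  set n := Nat.card G with hn
  have hdvd360 : n ∣ 360 := by
    have h2 := Subgroup.card_dvd_of_le hle
    rwa [card_alt6] at h2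
  have h5n : 5 ∣ n := by
    obtain ⟨g, hgG, hg5⟩ := h5
    have : orderOf (⟨g, hgG⟩ : G) = 5 := by
      rw [← Subgroup.orderOf_coe]
      exact hg5
    rw [hn, ← this]
    exact orderOf_dvd_natCard _
  have horb : ∀ a : Fin 6, MulAction.orbit G a = Set.univ := by
    intro a
    ext y
    simp only [Set.mem_univ, iff_true]
    obtain ⟨g', hg', hgy⟩ := htrans a y
    exact MulAction.mem_orbit_iff.2 ⟨⟨g', hg'⟩, hgy⟩
  have hstab : ∀ a : Fin 6, 6 * Nat.card (stabilizer G a) = n := by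
    intro a
    letI : Fintype G := Fintype.ofFinite G
    letI : Fintype (MulAction.orbit G a) := Fintype.ofFinite _
    letI : Fintype (stabilizer G a) := Fintype.ofFinite _
    have h1 := MulAction.card_orbit_mul_card_stabilizer_eq_card_group G a
    simp only [← Nat.card_eq_fintype_card] at h1
    have h2 : Nat.card (MulAction.orbit G a) = 6 := by
      have e : MulAction.orbit G a ≃ Fin 6 :=
        (Equiv.setCongr (horb a)).trans (Equiv.Set.univ _)
      rw [Nat.card_congr e, Nat.card_eq_fintype_card, Fintype.card_fin]
    rw [h2] at h1
    exact h1
  have h6n : 6 ∣ n := ⟨_, (hstab 0).symm⟩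
  have h30n : 30 ∣ n := by
    have hcop : (6 : ℕ).Coprime 5 := by norm_num
    have h := Nat.Coprime.mul_dvd_of_dvd_of_dvd hcop h6n h5n
    simpa using h
  have hnpos : n ≠ 0 := by
    rw [hn]
    exact Nat.card_pos.ne'
  obtain ⟨k, hk⟩ := h30n
  have hk12 : k ∣ 12 := by
    have h1 : 30 * k ∣ 30 * 12 := by rw [← hk]; exact hdvd360
    exact (mul_dvd_mul_iff_left (by norm_num : (30:ℕ) ≠ 0)).1 h1
  have hkpos : 1 ≤ k := by
    rcases Nat.eq_zero_or_pos k with h | h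
    · exfalso; apply hnpos; omega
    · omega
  have hk12' : k ≤ 12 := Nat.le_of_dvd (by norm_num) hk12
  -- the stabilizer trick excluding n = 30 and n = 90
  have stabtrick : ¬ (n = 30 ∨ n = 90) := by
    rintro hcase
    letI : Fintype G := Fintype.ofFinite G
    have hcard : Fintype.card G = n := by rw [hn, Nat.card_eq_fintype_card]
    have h2dvd : 2 ∣ Fintype.card G := by rw [hcard]; rcases hcase with h | h <;> omega
    obtain ⟨t, ht2⟩ := exists_prime_orderOf_dvd_card 2 h2dvd
    have ht2' : orderOf (t : Perm (Fin 6)) = 2 := by rw [Subgroup.orderOf_coe]; exact ht2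
    have htsign : sign (t : Perm (Fin 6)) = 1 := mem_alternatingGroup.1 (hle t.2)
    obtain ⟨a, hta⟩ := invol_fixed _ htsign ht2'
    have htstab : t ∈ stabilizer G a := by
      rw [MulAction.mem_stabilizer_iff]
      exact hta
    have ho : orderOf (⟨t, htstab⟩ : stabilizer G a) = 2 := by
      rw [← Subgroup.orderOf_coe (⟨t, htstab⟩ : stabilizer G a)]
      exact ht2
    have hdvd : 2 ∣ Nat.card (stabilizer G a) := by
      rw [← ho]
      exact orderOf_dvd_natCard _
    have hsa := hstab a
    rcases hcase with h | h <;> rw [h] at hsa <;> omega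
  -- set up the coset action
  set H := G.subgroupOf (alternatingGroup (Fin 6)) with hH
  have hcardH : Nat.card H = n := by
    rw [hn]
    exact Nat.card_congr (Subgroup.subgroupOfEquivOfLe hle).toEquiv
  have hHindex : Nat.card H * H.index = 360 := by
    rw [Subgroup.card_mul_index, card_alt6]
  set φ := MulAction.toPermHom (alternatingGroup (Fin 6))
    ((alternatingGroup (Fin 6)) ⧸ H) with hφ
  have hkerle : φ.ker ≤ H := by
    intro x hx
    have h1 : φ x = 1 := hx
    have h2 : x • ((1 : alternatingGroup (Fin 6)) : (alternatingGroup (Fin 6)) ⧸ H)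
        = ((1 : alternatingGroup (Fin 6)) : (alternatingGroup (Fin 6)) ⧸ H) := by
      show (φ x) ((1 : alternatingGroup (Fin 6)) : (alternatingGroup (Fin 6)) ⧸ H) = _
      rw [h1]
      rfl
    have h3 : ((x * 1 : alternatingGroup (Fin 6)) : (alternatingGroup (Fin 6)) ⧸ H)
        = ((1 : alternatingGroup (Fin 6)) : (alternatingGroup (Fin 6)) ⧸ H) := h2
    have h4 := (QuotientGroup.eq.1 h3)
    simpa using (H.inv_mem_iff.1 (by simpa using h4))
  have hcardQ : Nat.card ((alternatingGroup (Fin 6)) ⧸ H) = H.index :=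
    (Subgroup.index_eq_card H).symm
  have hkernotop : φ.ker ≠ ⊤ ∨ n = 360 := by
    by_cases h : n = 360
    · exact Or.inr h
    · left
      intro hker
      have hHtop : H = ⊤ := eq_top_iff.2 (hker ▸ hkerle)
      rw [hHtop, Subgroup.card_top, card_alt6] at hcardH
      exact h hcardH.symm
  -- kernel trick : index 2 or 3 impossible
  have kertrick : ¬ (H.index = 2 ∨ H.index = 3) := by
    intro hidx
    have hker5 : ∀ x : alternatingGroup (Fin 6), orderOf x = 5 → x ∈ φ.ker := by
      intro x hx
      rw [MonoidHom.mem_ker, ← orderOf_eq_one_iff]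
      have hd5 : orderOf (φ x) ∣ 5 := hx ▸ orderOf_map_dvd φ x
      have hd6 : orderOf (φ x) ∣ 6 := by
        have h1 : orderOf (φ x) ∣ Nat.card (Perm ((alternatingGroup (Fin 6)) ⧸ H)) :=
          orderOf_dvd_natCard _
        have h2 : Nat.card (Perm ((alternatingGroup (Fin 6)) ⧸ H)) ∣ 6 := by
          letI : Fintype ((alternatingGroup (Fin 6)) ⧸ H) := Fintype.ofFinite _
          rw [Nat.card_eq_fintype_card, Fintype.card_perm, ← Nat.card_eq_fintype_card, hcardQ]
          rcases hidx with h | h <;> rw [h] <;> decide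
        exact h1.trans h2
      have := Nat.dvd_gcd hd5 hd6
      simpa using this
    have hker : φ.ker = ⊤ := normalFive φ.ker inferInstance hker5
    have hHtop : H = ⊤ := eq_top_iff.2 (hker ▸ hkerle)
    rcases hidx with h | h <;> rw [hHtop, Subgroup.index_top] at h <;> omega
  -- final case analysis
  interval_cases k
  · exact absurd (Or.inl (by omega)) stabtrick
  · -- n = 60 : the main case
    right
    have hn60 : n = 60 := by omega
    have hker : φ.ker = ⊥ := by
      rcases A6_simple φ.ker inferInstance with h | h
      · exact h
      · exfalso
        have hHtop : H = ⊤ := eq_top_iff.2 (h ▸ hkerle)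
        rw [hHtop, Subgroup.card_top, card_alt6] at hcardH
        omega
    have hφinj : Function.Injective φ := (MonoidHom.ker_eq_bot_iff φ).1 hker
    letI : Fintype ((alternatingGroup (Fin 6)) ⧸ H) := Fintype.ofFinite _
    have hQ6 : Nat.card ((alternatingGroup (Fin 6)) ⧸ H) = 6 := by
      rw [hcardQ]
      have h1 : n * H.index = 360 := by rw [← hcardH]; exact hHindex
      rw [hn60] at h1
      omega
    -- the sign of every element of the range is 1
    set s := (Equiv.Perm.sign).comp φ with hs
    have hsker : ∀ x : alternatingGroup (Fin 6), orderOf x = 5 → x ∈ s.ker := by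
      intro x hx
      rw [MonoidHom.mem_ker, ← orderOf_eq_one_iff]
      have hd5 : orderOf (s x) ∣ 5 := hx ▸ orderOf_map_dvd s x
      have hd2 : orderOf (s x) ∣ 2 := orderOf_dvd_of_pow_eq_one (Int.units_sq (s x))
      have := Nat.dvd_gcd hd5 hd2
      simpa using this
    have hstop : s.ker = ⊤ := normalFive s.ker inferInstance hsker
    have hsign1 : ∀ x : alternatingGroup (Fin 6), Equiv.Perm.sign (φ x) = 1 := by
      intro x
      have : x ∈ s.ker := hstop ▸ Subgroup.mem_top x
      exact MonoidHom.mem_ker.1 this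
    have hrange_le : φ.range ≤ alternatingGroup ((alternatingGroup (Fin 6)) ⧸ H) := by
      rintro τ ⟨x, rfl⟩
      exact mem_alternatingGroup.2 (hsign1 x)
    have hcardrange : Nat.card φ.range = 360 := by
      have h1 := Nat.card_congr (MonoidHom.ofInjective hφinj).toEquiv
      rw [card_alt6] at h1
      exact h1.symm
    have hcardaltQ : Nat.card (alternatingGroup ((alternatingGroup (Fin 6)) ⧸ H)) = 360 := by
      have hq : Fintype.card ((alternatingGroup (Fin 6)) ⧸ H) = 6 := by
        rw [← Nat.card_eq_fintype_card]
        exact hQ6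
      haveI : Nontrivial ((alternatingGroup (Fin 6)) ⧸ H) :=
        Fintype.one_lt_card_iff_nontrivial.1 (by omega)
      have h := two_mul_card_alternatingGroup (α := (alternatingGroup (Fin 6)) ⧸ H)
      rw [Fintype.card_perm, hq] at h
      have h720 : Nat.factorial 6 = 720 := rfl
      rw [Nat.card_eq_fintype_card]
      omega
    have hrange_eq : φ.range = alternatingGroup ((alternatingGroup (Fin 6)) ⧸ H) :=
      Subgroup.eq_of_le_of_card_ge hrange_le (by rw [hcardrange, hcardaltQ])
    -- transport to Fin 6
    set pt := ((1 : alternatingGroup (Fin 6)) : (alternatingGroup (Fin 6)) ⧸ H) with hpt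
    have e₀ : ((alternatingGroup (Fin 6)) ⧸ H) ≃ Fin 6 :=
      Fintype.equivFinOfCardEq (by rw [← Nat.card_eq_fintype_card]; exact hQ6)
    set e := e₀.trans (Equiv.swap (e₀ pt) 5) with he
    have hept : e pt = 5 := by
      rw [he]
      simp [Equiv.swap_apply_left]
    have hesymm5 : e.symm 5 = pt := by
      rw [← hept]
      exact e.symm_apply_apply pt
    -- elements of H fix pt
    have hHfix : ∀ h : H, φ (h : alternatingGroup (Fin 6)) pt = pt := by
      intro h
      show ((h : alternatingGroup (Fin 6)) • pt) = pt
      rw [hpt]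
      show (((h : alternatingGroup (Fin 6)) * 1 :
        alternatingGroup (Fin 6)) : (alternatingGroup (Fin 6)) ⧸ H) = _
      apply (QuotientGroup.eq).2
      simpa using H.inv_mem h.2
    set χ : H →* Perm (Fin 6) := (Stmt12Aux.permCongrHom e).comp (φ.comp H.subtype) with hχ
    have hχK5 : ∀ h : H, χ h ∈ K5 := by
      intro h
      rw [K5, Subgroup.mem_inf]
      constructor
      · rw [mem_alternatingGroup]
        show Equiv.Perm.sign (e.permCongr (φ (h : alternatingGroup (Fin 6)))) = 1
        rw [Equiv.Perm.sign_permCongr]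
        exact hsign1 _
      · rw [MulAction.mem_stabilizer_iff]
        show (e.permCongr (φ (h : alternatingGroup (Fin 6)))) • (5 : Fin 6) = 5
        rw [Equiv.Perm.smul_def, Equiv.permCongr_apply, hesymm5, hHfix h, hept]
    set χ' : H →* K5 := χ.codRestrict K5 hχK5 with hχ'
    have hbij : Function.Bijective χ' := by
      constructor
      · intro a b hab
        have h1 : χ a = χ b := congrArg Subtype.val hab
        have h2 : φ (a : alternatingGroup (Fin 6)) = φ (b : alternatingGroup (Fin 6)) :=
          permCongrHom_injective e h1
        exact Subtype.ext (hφinj h2)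
      · rintro ⟨τ, hτ⟩
        rw [K5, Subgroup.mem_inf] at hτ
        obtain ⟨hτA, hτ5⟩ := hτ
        rw [MulAction.mem_stabilizer_iff, Equiv.Perm.smul_def] at hτ5
        set ρ : Perm ((alternatingGroup (Fin 6)) ⧸ H) := (Stmt12Aux.permCongrHom e.symm) τ with hρ
        have hρA : ρ ∈ alternatingGroup ((alternatingGroup (Fin 6)) ⧸ H) := by
          rw [mem_alternatingGroup]
          show Equiv.Perm.sign (e.symm.permCongr τ) = 1
          rw [Equiv.Perm.sign_permCongr]
          exact mem_alternatingGroup.1 hτA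
        have hρrange : ρ ∈ φ.range := by rw [hrange_eq]; exact hρA
        obtain ⟨a, ha⟩ := hρrange
        have haH : a ∈ H := by
          have h1 : φ a pt = pt := by
            rw [ha]
            show e.symm (τ (e pt)) = pt
            rw [hept, hτ5, hesymm5]
          have h2 : ((a * 1 : alternatingGroup (Fin 6)) : (alternatingGroup (Fin 6)) ⧸ H)
              = ((1 : alternatingGroup (Fin 6)) : (alternatingGroup (Fin 6)) ⧸ H) := h1
          have h4 := (QuotientGroup.eq.1 h2)
          simpa using (H.inv_mem_iff.1 (by simpa using h4))
        refine ⟨⟨a, haH⟩, ?_⟩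
        apply Subtype.ext
        show (Stmt12Aux.permCongrHom e) (φ a) = τ
        rw [ha]
        show e.permCongr (e.symm.permCongr τ) = τ
        ext x
        simp
    exact ⟨((Subgroup.subgroupOfEquivOfLe hle).symm.trans
      ((MulEquiv.ofBijective χ' hbij))).trans stabIso⟩
  · exact absurd (Or.inr (by omega)) stabtrick
  · -- n = 120
    exfalso
    apply kertrick
    right
    have h1 : n * H.index = 360 := by rw [← hcardH]; exact hHindex
    rw [hk] at h1
    omega
  · exact absurd hk12 (by decide)
  · -- n = 180
    exfalso
    apply kertrick
    left
    have h1 : n * H.index = 360 := by rw [← hcardH]; exact hHindex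
    rw [hk] at h1
    omega
  · exact absurd hk12 (by decide)
  · exact absurd hk12 (by decide)
  · exact absurd hk12 (by decide)
  · exact absurd hk12 (by decide)
  · exact absurd hk12 (by decide)
  · -- n = 360
    left
    exact Subgroup.eq_of_le_of_card_ge hle (by rw [card_alt6]; omega)
end

section
/- Let G be a subgroup of the symmetric group S₆ on {1,...,6} that acts transitively on the 6 points and contains both a 5-cycle and a 3-cycle. Then G contains the alternating group A₆. -/
abbrev P6 := Equiv.Perm (Fin 6)

def c3 (a b c : Fin 6) : P6 := Equiv.swap a b * Equiv.swap a c

def s5 : P6 := ([0,1,2,3,4] : List (Fin 6)).formPerm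

theorem s5_cycleType : s5.cycleType = {5} := by
  have hnd : ([0,1,2,3,4] : List (Fin 6)).Nodup := by decide
  have hc := List.isCycle_formPerm hnd (l := [0,1,2,3,4]) (by decide)
  show ([0,1,2,3,4] : List (Fin 6)).formPerm.cycleType = {5}
  rw [Equiv.Perm.IsCycle.cycleType hc]
  rw [List.support_formPerm_of_nodup _ hnd (by decide)]
  decide

theorem c3_cyclic : ∀ a b c : Fin 6, a ≠ b → a ≠ c → b ≠ c → c3 a b c = c3 c a b := by decide

theorem c3_inv : ∀ a b c : Fin 6, (c3 a b c)⁻¹ = c3 a c b := by decide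

theorem c3_fix : ∀ a b c x : Fin 6, x ≠ a → x ≠ b → x ≠ c → c3 a b c x = x := by decide

theorem c3_ap1 : ∀ a b c : Fin 6, a ≠ b → a ≠ c → b ≠ c → c3 a b c a = c := by decide
theorem c3_ap2 : ∀ a b c : Fin 6, a ≠ b → a ≠ c → b ≠ c → c3 a b c c = b := by decide
theorem c3_ap3 : ∀ a b c : Fin 6, a ≠ b → a ≠ c → b ≠ c → c3 a b c b = a := by decide

theorem conj_c3 (g : P6) (a b c : Fin 6) : g * c3 a b c * g⁻¹ = c3 (g a) (g b) (g c) := by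
  simp only [c3, Equiv.swap_apply_apply]
  group

theorem threeCycle_eq (f : P6) (hf : f.IsThreeCycle) :
    ∃ a b c : Fin 6, a ≠ b ∧ a ≠ c ∧ b ≠ c ∧ f = c3 a b c := by
  have h3 : f.support.card = 3 := hf.card_support
  have hne : f.support.Nonempty := by
    rw [← Finset.card_pos, h3]; norm_num
  obtain ⟨a, ha⟩ := hne
  obtain ⟨b, hb⟩ : ∃ b, f a = b := ⟨f a, rfl⟩
  obtain ⟨c, hc⟩ : ∃ c, f b = c := ⟨f b, rfl⟩
  have hfa : f a ≠ a := Equiv.Perm.mem_support.mp ha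
  have hbsup : b ∈ f.support := hb ▸ Equiv.Perm.apply_mem_support.mpr ha
  have hcsup : c ∈ f.support := hc ▸ Equiv.Perm.apply_mem_support.mpr hbsup
  have hab : a ≠ b := fun h => hfa (hb.trans h.symm)
  have hbc : b ≠ c := fun h => (Equiv.Perm.mem_support.mp hbsup) (hc.trans h.symm)
  have horder : f ^ 3 = 1 := by
    rw [← hf.orderOf]; exact pow_orderOf_eq_one f
  have hpow : f (f (f a)) = a := by
    have h1 : (f ^ 3) a = a := by rw [horder]; rfl
    simpa [pow_succ, Equiv.Perm.mul_apply] using h1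
  have hca : c ≠ a := by
    intro h
    apply hab
    calc a = f (f (f a)) := hpow.symm
    _ = f c := by rw [hb, hc]
    _ = f a := by rw [h]
    _ = b := hb
  have hac : a ≠ c := hca.symm
  have hcb : c ≠ b := hbc.symm
  have hfc : f c = a := by rw [← hc, ← hb]; exact hpow
  have hsub : ({a, b, c} : Finset (Fin 6)) ⊆ f.support := by
    intro x hx
    simp only [Finset.mem_insert, Finset.mem_singleton] at hx
    rcases hx with rfl | rfl | rfl
    · exact ha
    · exact hbsup
    · exact hcsup
  have hcard3 : ({a, b, c} : Finset (Fin 6)).card = 3 :=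
    Finset.card_eq_three.mpr ⟨a, b, c, hab, hac, hbc, rfl⟩
  have hsup : f.support = {a, b, c} :=
    (Finset.eq_of_subset_of_card_le hsub (by rw [h3, hcard3])).symm
  refine ⟨a, c, b, hac, hab, hcb, ?_⟩
  apply Equiv.ext
  intro x
  by_cases hxa : x = a
  · rw [hxa, c3_ap1 a c b hac hab hcb]; exact hb
  by_cases hxb : x = b
  · rw [hxb, c3_ap2 a c b hac hab hcb]; exact hc
  by_cases hxc : x = c
  · rw [hxc, c3_ap3 a c b hac hab hcb]; exact hfc
  · rw [c3_fix a c b x hxa hxc hxb]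
    have hns : x ∉ f.support := by
      rw [hsup]; simp [hxa, hxb, hxc]
    exact Equiv.Perm.notMem_support.mp hns
theorem stepA (G : Subgroup P6) (hs : s5 ∈ G) (a b c : Fin 6)
    (hab : a ≠ b) (hac : a ≠ c) (hbc : b ≠ c) (ht : c3 a b c ∈ G) :
    c3 0 1 2 ∈ G := by
  have key : ∀ a b c : Fin 6, a ≠ b → a ≠ c → b ≠ c →
      c3 a b c ∈ ([c3 0 1 2, c3 0 2 1, c3 0 1 3, c3 0 3 1, c3 0 1 4, c3 0 4 1, c3 0 1 5, c3 0 5 1, c3 0 2 3, c3 0 3 2, c3 0 2 4, c3 0 4 2, c3 0 2 5, c3 0 5 2, c3 0 3 4, c3 0 4 3, c3 0 3 5, c3 0 5 3, c3 0 4 5, c3 0 5 4, c3 1 2 3, c3 1 3 2, c3 1 2 4, c3 1 4 2, c3 1 2 5, c3 1 5 2, c3 1 3 4, c3 1 4 3, c3 1 3 5, c3 1 5 3, c3 1 4 5, c3 1 5 4, c3 2 3 4, c3 2 4 3, c3 2 3 5, c3 2 5 3, c3 2 4 5, c3 2 5 4, c3 3 4 5, c3 3 5 4] : List P6) := by dec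ide
  have hmem := key a b c hab hac hbc
  simp only [List.mem_cons, List.not_mem_nil, or_false] at hmem
  rcases hmem with h|h|h|h|h|h|h|h|h|h|h|h|h|h|h|h|h|h|h|h|h|h|h|h|h|h|h|h|h|h|h|h|h|h|h|h|h|h|h|h
  · have ht' : c3 0 1 2 ∈ G := h ▸ ht
    have e : (c3 0 1 2) = c3 0 1 2 := by decide
    exact e ▸ ht'
  · have ht' : c3 0 2 1 ∈ G := h ▸ ht
    have e : (c3 0 2 1)⁻¹ = c3 0 1 2 := by decide
    exact e ▸ (inv_mem ht')
  · have ht' : c3 0 1 3 ∈ G := h ▸ ht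
    have e : (c3 0 1 3) * s5⁻¹ * s5⁻¹ * (c3 0 1 3) * s5⁻¹ = c3 0 1 2 := by decide
    exact e ▸ (mul_mem (mul_mem (mul_mem (mul_mem ht' (inv_mem hs)) (inv_mem hs)) ht') (inv_mem hs))
  · have ht' : c3 0 3 1 ∈ G := h ▸ ht
    have e : (c3 0 3 1)⁻¹ * s5⁻¹ * s5⁻¹ * (c3 0 3 1)⁻¹ * s5⁻¹ = c3 0 1 2 := by decide
    exact e ▸ (mul_mem (mul_mem (mul_mem (mul_mem (inv_mem ht') (inv_mem hs)) (inv_mem hs)) (inv_mem ht')) (inv_mem hs))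
  · have ht' : c3 0 1 4 ∈ G := h ▸ ht
    have e : s5 * (c3 0 1 4) * s5⁻¹ = c3 0 1 2 := by decide
    exact e ▸ (mul_mem (mul_mem hs ht') (inv_mem hs))
  · have ht' : c3 0 4 1 ∈ G := h ▸ ht
    have e : s5 * (c3 0 4 1)⁻¹ * s5⁻¹ = c3 0 1 2 := by decide
    exact e ▸ (mul_mem (mul_mem hs (inv_mem ht')) (inv_mem hs))
  · have ht' : c3 0 1 5 ∈ G := h ▸ ht
    have e : s5 * (c3 0 1 5) * s5⁻¹ * (c3 0 1 5) = c3 0 1 2 := by decide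
    exact e ▸ (mul_mem (mul_mem (mul_mem hs ht') (inv_mem hs)) ht')
  · have ht' : c3 0 5 1 ∈ G := h ▸ ht
    have e : s5 * (c3 0 5 1)⁻¹ * s5⁻¹ * (c3 0 5 1)⁻¹ = c3 0 1 2 := by decide
    exact e ▸ (mul_mem (mul_mem (mul_mem hs (inv_mem ht')) (inv_mem hs)) (inv_mem ht'))
  · have ht' : c3 0 2 3 ∈ G := h ▸ ht
    have e : s5 * s5 * (c3 0 2 3) * s5⁻¹ * (c3 0 2 3) = c3 0 1 2 := by decide
    exact e ▸ (mul_mem (mul_mem (mul_mem (mul_mem hs hs) ht') (inv_mem hs)) ht')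
  · have ht' : c3 0 3 2 ∈ G := h ▸ ht
    have e : s5 * s5 * (c3 0 3 2) * s5 * (c3 0 3 2) = c3 0 1 2 := by decide
    exact e ▸ (mul_mem (mul_mem (mul_mem (mul_mem hs hs) ht') hs) ht')
  · have ht' : c3 0 2 4 ∈ G := h ▸ ht
    have e : (c3 0 2 4) * s5⁻¹ * s5⁻¹ * (c3 0 2 4)⁻¹ * s5 = c3 0 1 2 := by decide
    exact e ▸ (mul_mem (mul_mem (mul_mem (mul_mem ht' (inv_mem hs)) (inv_mem hs)) (inv_mem ht')) hs)
  · have ht' : c3 0 4 2 ∈ G := h ▸ ht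
    have e : (c3 0 4 2) * s5 * (c3 0 4 2) * s5 * s5 = c3 0 1 2 := by decide
    exact e ▸ (mul_mem (mul_mem (mul_mem (mul_mem ht' hs) ht') hs) hs)
  · have ht' : c3 0 2 5 ∈ G := h ▸ ht
    have e : s5 * (c3 0 2 5)⁻¹ * s5⁻¹ * (c3 0 2 5)⁻¹ * s5 * (c3 0 2 5) * s5⁻¹ = c3 0 1 2 := by decide
    exact e ▸ (mul_mem (mul_mem (mul_mem (mul_mem (mul_mem (mul_mem hs (inv_mem ht')) (inv_mem hs)) (inv_mem ht')) hs) ht') (inv_mem hs))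
  · have ht' : c3 0 5 2 ∈ G := h ▸ ht
    have e : s5 * (c3 0 5 2) * s5⁻¹ * (c3 0 5 2) * s5 * (c3 0 5 2)⁻¹ * s5⁻¹ = c3 0 1 2 := by decide
    exact e ▸ (mul_mem (mul_mem (mul_mem (mul_mem (mul_mem (mul_mem hs ht') (inv_mem hs)) ht') hs) (inv_mem ht')) (inv_mem hs))
  · have ht' : c3 0 3 4 ∈ G := h ▸ ht
    have e : s5⁻¹ * (c3 0 3 4)⁻¹ = c3 0 1 2 := by decide
    exact e ▸ (mul_mem (inv_mem hs) (inv_mem ht'))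
  · have ht' : c3 0 4 3 ∈ G := h ▸ ht
    have e : s5⁻¹ * (c3 0 4 3) = c3 0 1 2 := by decide
    exact e ▸ (mul_mem (inv_mem hs) ht')
  · have ht' : c3 0 3 5 ∈ G := h ▸ ht
    have e : (c3 0 3 5) * s5⁻¹ * (c3 0 3 5)⁻¹ * s5 * (c3 0 3 5)⁻¹ * s5⁻¹ = c3 0 1 2 := by decide
    exact e ▸ (mul_mem (mul_mem (mul_mem (mul_mem (mul_mem ht' (inv_mem hs)) (inv_mem ht')) hs) (inv_mem ht')) (inv_mem hs))
  · have ht' : c3 0 5 3 ∈ G := h ▸ ht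
    have e : (c3 0 5 3)⁻¹ * s5⁻¹ * (c3 0 5 3) * s5 * (c3 0 5 3) * s5⁻¹ = c3 0 1 2 := by decide
    exact e ▸ (mul_mem (mul_mem (mul_mem (mul_mem (mul_mem (inv_mem ht') (inv_mem hs)) ht') hs) ht') (inv_mem hs))
  · have ht' : c3 0 4 5 ∈ G := h ▸ ht
    have e : s5⁻¹ * s5⁻¹ * (c3 0 4 5) * s5 * (c3 0 4 5) = c3 0 1 2 := by decide
    exact e ▸ (mul_mem (mul_mem (mul_mem (mul_mem (inv_mem hs) (inv_mem hs)) ht') hs) ht')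
  · have ht' : c3 0 5 4 ∈ G := h ▸ ht
    have e : s5⁻¹ * s5⁻¹ * (c3 0 5 4)⁻¹ * s5 * (c3 0 5 4)⁻¹ = c3 0 1 2 := by decide
    exact e ▸ (mul_mem (mul_mem (mul_mem (mul_mem (inv_mem hs) (inv_mem hs)) (inv_mem ht')) hs) (inv_mem ht'))
  · have ht' : c3 1 2 3 ∈ G := h ▸ ht
    have e : s5⁻¹ * (c3 1 2 3) * s5 = c3 0 1 2 := by decide
    exact e ▸ (mul_mem (mul_mem (inv_mem hs) ht') hs)
  · have ht' : c3 1 3 2 ∈ G := h ▸ ht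
    have e : s5⁻¹ * (c3 1 3 2)⁻¹ * s5 = c3 0 1 2 := by decide
    exact e ▸ (mul_mem (mul_mem (inv_mem hs) (inv_mem ht')) hs)
  · have ht' : c3 1 2 4 ∈ G := h ▸ ht
    have e : s5⁻¹ * (c3 1 2 4) * s5⁻¹ * s5⁻¹ * (c3 1 2 4) = c3 0 1 2 := by decide
    exact e ▸ (mul_mem (mul_mem (mul_mem (mul_mem (inv_mem hs) ht') (inv_mem hs)) (inv_mem hs)) ht')
  · have ht' : c3 1 4 2 ∈ G := h ▸ ht
    have e : s5⁻¹ * (c3 1 4 2)⁻¹ * s5⁻¹ * s5⁻¹ * (c3 1 4 2)⁻¹ = c3 0 1 2 := by decide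
    exact e ▸ (mul_mem (mul_mem (mul_mem (mul_mem (inv_mem hs) (inv_mem ht')) (inv_mem hs)) (inv_mem hs)) (inv_mem ht'))
  · have ht' : c3 1 2 5 ∈ G := h ▸ ht
    have e : (c3 1 2 5) * s5⁻¹ * (c3 1 2 5) * s5 = c3 0 1 2 := by decide
    exact e ▸ (mul_mem (mul_mem (mul_mem ht' (inv_mem hs)) ht') hs)
  · have ht' : c3 1 5 2 ∈ G := h ▸ ht
    have e : (c3 1 5 2)⁻¹ * s5⁻¹ * (c3 1 5 2)⁻¹ * s5 = c3 0 1 2 := by decide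
    exact e ▸ (mul_mem (mul_mem (mul_mem (inv_mem ht') (inv_mem hs)) (inv_mem ht')) hs)
  · have ht' : c3 1 3 4 ∈ G := h ▸ ht
    have e : (c3 1 3 4)⁻¹ * s5 * s5 * (c3 1 3 4)⁻¹ = c3 0 1 2 := by decide
    exact e ▸ (mul_mem (mul_mem (mul_mem (inv_mem ht') hs) hs) (inv_mem ht'))
  · have ht' : c3 1 4 3 ∈ G := h ▸ ht
    have e : (c3 1 4 3) * s5 * s5 * (c3 1 4 3) = c3 0 1 2 := by decide
    exact e ▸ (mul_mem (mul_mem (mul_mem ht' hs) hs) ht')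
  · have ht' : c3 1 3 5 ∈ G := h ▸ ht
    have e : (c3 1 3 5)⁻¹ * s5⁻¹ * (c3 1 3 5)⁻¹ * s5 * (c3 1 3 5) = c3 0 1 2 := by decide
    exact e ▸ (mul_mem (mul_mem (mul_mem (mul_mem (inv_mem ht') (inv_mem hs)) (inv_mem ht')) hs) ht')
  · have ht' : c3 1 5 3 ∈ G := h ▸ ht
    have e : (c3 1 5 3) * s5⁻¹ * (c3 1 5 3) * s5 * (c3 1 5 3)⁻¹ = c3 0 1 2 := by decide
    exact e ▸ (mul_mem (mul_mem (mul_mem (mul_mem ht' (inv_mem hs)) ht') hs) (inv_mem ht'))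
  · have ht' : c3 1 4 5 ∈ G := h ▸ ht
    have e : (c3 1 4 5)⁻¹ * s5 * (c3 1 4 5) * s5⁻¹ * (c3 1 4 5) = c3 0 1 2 := by decide
    exact e ▸ (mul_mem (mul_mem (mul_mem (mul_mem (inv_mem ht') hs) ht') (inv_mem hs)) ht')
  · have ht' : c3 1 5 4 ∈ G := h ▸ ht
    have e : (c3 1 5 4) * s5 * (c3 1 5 4)⁻¹ * s5⁻¹ * (c3 1 5 4)⁻¹ = c3 0 1 2 := by decide
    exact e ▸ (mul_mem (mul_mem (mul_mem (mul_mem ht' hs) (inv_mem ht')) (inv_mem hs)) (inv_mem ht'))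
  · have ht' : c3 2 3 4 ∈ G := h ▸ ht
    have e : (c3 2 3 4)⁻¹ * s5⁻¹ = c3 0 1 2 := by decide
    exact e ▸ (mul_mem (inv_mem ht') (inv_mem hs))
  · have ht' : c3 2 4 3 ∈ G := h ▸ ht
    have e : (c3 2 4 3) * s5⁻¹ = c3 0 1 2 := by decide
    exact e ▸ (mul_mem ht' (inv_mem hs))
  · have ht' : c3 2 3 5 ∈ G := h ▸ ht
    have e : (c3 2 3 5)⁻¹ * s5 * (c3 2 3 5)⁻¹ * s5⁻¹ * s5⁻¹ = c3 0 1 2 := by decide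
    exact e ▸ (mul_mem (mul_mem (mul_mem (mul_mem (inv_mem ht') hs) (inv_mem ht')) (inv_mem hs)) (inv_mem hs))
  · have ht' : c3 2 5 3 ∈ G := h ▸ ht
    have e : (c3 2 5 3) * s5 * (c3 2 5 3) * s5⁻¹ * s5⁻¹ = c3 0 1 2 := by decide
    exact e ▸ (mul_mem (mul_mem (mul_mem (mul_mem ht' hs) ht') (inv_mem hs)) (inv_mem hs))
  · have ht' : c3 2 4 5 ∈ G := h ▸ ht
    have e : s5⁻¹ * (c3 2 4 5) * s5 * (c3 2 4 5) * s5⁻¹ * (c3 2 4 5)⁻¹ = c3 0 1 2 := by decide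
    exact e ▸ (mul_mem (mul_mem (mul_mem (mul_mem (mul_mem (inv_mem hs) ht') hs) ht') (inv_mem hs)) (inv_mem ht'))
  · have ht' : c3 2 5 4 ∈ G := h ▸ ht
    have e : s5⁻¹ * (c3 2 5 4)⁻¹ * s5 * (c3 2 5 4)⁻¹ * s5⁻¹ * (c3 2 5 4) = c3 0 1 2 := by decide
    exact e ▸ (mul_mem (mul_mem (mul_mem (mul_mem (mul_mem (inv_mem hs) (inv_mem ht')) hs) (inv_mem ht')) (inv_mem hs)) ht')
  · have ht' : c3 3 4 5 ∈ G := h ▸ ht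
    have e : s5⁻¹ * (c3 3 4 5)⁻¹ * s5 * (c3 3 4 5)⁻¹ * s5⁻¹ = c3 0 1 2 := by decide
    exact e ▸ (mul_mem (mul_mem (mul_mem (mul_mem (inv_mem hs) (inv_mem ht')) hs) (inv_mem ht')) (inv_mem hs))
  · have ht' : c3 3 5 4 ∈ G := h ▸ ht
    have e : s5⁻¹ * (c3 3 5 4) * s5 * (c3 3 5 4) * s5⁻¹ = c3 0 1 2 := by decide
    exact e ▸ (mul_mem (mul_mem (mul_mem (mul_mem (inv_mem hs) ht') hs) ht') (inv_mem hs))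

theorem stepB (G : Subgroup P6) (hs : s5 ∈ G) (h012 : c3 0 1 2 ∈ G) (a b c : Fin 6)
    (hab : a ≠ b) (hac : a ≠ c) (hbc : b ≠ c)
    (ha : a ≠ 5) (hb : b ≠ 5) (hc : c ≠ 5) :
    c3 a b c ∈ G := by
  have key : ∀ a b c : Fin 6, a ≠ b → a ≠ c → b ≠ c → a ≠ 5 → b ≠ 5 → c ≠ 5 →
      c3 a b c ∈ ([c3 0 1 2, c3 0 2 1, c3 0 1 3, c3 0 3 1, c3 0 1 4, c3 0 4 1, c3 0 2 3, c3 0 3 2, c3 0 2 4, c3 0 4 2, c3 0 3 4, c3 0 4 3, c3 1 2 3, c3 1 3 2, c3 1 2 4, c3 1 4 2, c3 1 3 4, c3 1 4 3, c3 2 3 4, c3 2 4 3] : List P6) := by decide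
  have hmem := key a b c hab hac hbc ha hb hc
  simp only [List.mem_cons, List.not_mem_nil, or_false] at hmem
  rcases hmem with h|h|h|h|h|h|h|h|h|h|h|h|h|h|h|h|h|h|h|h
  · rw [h]
    have e : (c3 0 1 2) = c3 0 1 2 := by decide
    exact e ▸ h012
  · have e : (c3 0 1 2)⁻¹ = c3 0 2 1 := by decide
    exact h.symm ▸ e ▸ (inv_mem h012)
  · have e : s5 * (c3 0 1 2)⁻¹ * s5⁻¹ * (c3 0 1 2) = c3 0 1 3 := by decide
    exact h.symm ▸ e ▸ (mul_mem (mul_mem (mul_mem hs (inv_mem h012)) (inv_mem hs)) h012)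
  · have e : (c3 0 1 2)⁻¹ * s5 * (c3 0 1 2) * s5⁻¹ = c3 0 3 1 := by decide
    exact h.symm ▸ e ▸ (mul_mem (mul_mem (mul_mem (inv_mem h012) hs) h012) (inv_mem hs))
  · have e : s5⁻¹ * (c3 0 1 2) * s5 = c3 0 1 4 := by decide
    exact h.symm ▸ e ▸ (mul_mem (mul_mem (inv_mem hs) h012) hs)
  · have e : s5⁻¹ * (c3 0 1 2)⁻¹ * s5 = c3 0 4 1 := by decide
    exact h.symm ▸ e ▸ (mul_mem (mul_mem (inv_mem hs) (inv_mem h012)) hs)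
  · have e : s5 * (c3 0 1 2) * s5⁻¹ * (c3 0 1 2)⁻¹ = c3 0 2 3 := by decide
    exact h.symm ▸ e ▸ (mul_mem (mul_mem (mul_mem hs h012) (inv_mem hs)) (inv_mem h012))
  · have e : (c3 0 1 2) * s5 * (c3 0 1 2)⁻¹ * s5⁻¹ = c3 0 3 2 := by decide
    exact h.symm ▸ e ▸ (mul_mem (mul_mem (mul_mem h012 hs) (inv_mem h012)) (inv_mem hs))
  · have e : (c3 0 1 2)⁻¹ * s5⁻¹ * (c3 0 1 2) * s5 = c3 0 2 4 := by decide
    exact h.symm ▸ e ▸ (mul_mem (mul_mem (mul_mem (inv_mem h012) (inv_mem hs)) h012) hs)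
  · have e : s5⁻¹ * (c3 0 1 2)⁻¹ * s5 * (c3 0 1 2) = c3 0 4 2 := by decide
    exact h.symm ▸ e ▸ (mul_mem (mul_mem (mul_mem (inv_mem hs) (inv_mem h012)) hs) h012)
  · have e : (c3 0 1 2)⁻¹ * s5⁻¹ = c3 0 3 4 := by decide
    exact h.symm ▸ e ▸ (mul_mem (inv_mem h012) (inv_mem hs))
  · have e : s5 * (c3 0 1 2) = c3 0 4 3 := by decide
    exact h.symm ▸ e ▸ (mul_mem hs h012)
  · have e : s5 * (c3 0 1 2) * s5⁻¹ = c3 1 2 3 := by decide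
    exact h.symm ▸ e ▸ (mul_mem (mul_mem hs h012) (inv_mem hs))
  · have e : s5 * (c3 0 1 2)⁻¹ * s5⁻¹ = c3 1 3 2 := by decide
    exact h.symm ▸ e ▸ (mul_mem (mul_mem hs (inv_mem h012)) (inv_mem hs))
  · have e : (c3 0 1 2) * s5⁻¹ * (c3 0 1 2)⁻¹ * s5 = c3 1 2 4 := by decide
    exact h.symm ▸ e ▸ (mul_mem (mul_mem (mul_mem h012 (inv_mem hs)) (inv_mem h012)) hs)
  · have e : s5⁻¹ * (c3 0 1 2) * s5 * (c3 0 1 2)⁻¹ = c3 1 4 2 := by decide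
    exact h.symm ▸ e ▸ (mul_mem (mul_mem (mul_mem (inv_mem hs) h012) hs) (inv_mem h012))
  · have e : (c3 0 1 2) * s5⁻¹ * (c3 0 1 2) = c3 1 3 4 := by decide
    exact h.symm ▸ e ▸ (mul_mem (mul_mem h012 (inv_mem hs)) h012)
  · have e : (c3 0 1 2)⁻¹ * s5 * (c3 0 1 2)⁻¹ = c3 1 4 3 := by decide
    exact h.symm ▸ e ▸ (mul_mem (mul_mem (inv_mem h012) hs) (inv_mem h012))
  · have e : s5⁻¹ * (c3 0 1 2)⁻¹ = c3 2 3 4 := by decide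
    exact h.symm ▸ e ▸ (mul_mem (inv_mem hs) (inv_mem h012))
  · have e : (c3 0 1 2) * s5 = c3 2 4 3 := by decide
    exact h.symm ▸ e ▸ (mul_mem h012 hs)

theorem pick3 : ∀ u v w : Fin 6, ∃ y z : Fin 6, y ≠ z ∧ y ≠ u ∧ y ≠ v ∧ y ≠ w ∧
    z ≠ u ∧ z ≠ v ∧ z ≠ w := by decide

theorem main6 (G : Subgroup P6) (htrans : ∀ x y : Fin 6, ∃ g ∈ G, g x = y)
    (hs : s5 ∈ G) (τ : P6) (hτG : τ ∈ G) (hτ : τ.IsThreeCycle) :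
    alternatingGroup (Fin 6) ≤ G := by
  obtain ⟨a, b, c, hab, hac, hbc, rfl⟩ := threeCycle_eq τ hτ
  have h012 : c3 0 1 2 ∈ G := stepA G hs a b c hab hac hbc hτG
  obtain ⟨h, hhG, hh0⟩ := htrans 0 5
  have hm5 : h 5 ≠ 5 := by
    intro e
    have h05 : (0 : Fin 6) = 5 := h.injective (hh0.trans e.symm)
    exact absurd h05 (by decide)
  have hT : ∀ p q r : Fin 6, p ≠ q → p ≠ r → q ≠ r →
      p ≠ h 5 → q ≠ h 5 → r ≠ h 5 → c3 p q r ∈ G := by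
    intro p q r hpq hpr hqr hpm hqm hrm
    have e : h * c3 (h⁻¹ p) (h⁻¹ q) (h⁻¹ r) * h⁻¹ = c3 p q r := by
      rw [conj_c3]
      simp [Equiv.apply_symm_apply]
    rw [← e]
    refine mul_mem (mul_mem hhG (stepB G hs h012 _ _ _ ?_ ?_ ?_ ?_ ?_ ?_)) (inv_mem hhG)
    · exact fun hh => hpq ((h⁻¹).injective hh)
    · exact fun hh => hpr ((h⁻¹).injective hh)
    · exact fun hh => hqr ((h⁻¹).injective hh)
    · exact fun hh => hpm (by exact Equiv.Perm.inv_eq_iff_eq.mp hh)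
    · exact fun hh => hqm (by exact Equiv.Perm.inv_eq_iff_eq.mp hh)
    · exact fun hh => hrm (by exact Equiv.Perm.inv_eq_iff_eq.mp hh)
  have hcore : ∀ x : Fin 6, x ≠ 5 → x ≠ h 5 → c3 5 (h 5) x ∈ G ∧ c3 5 x (h 5) ∈ G := by
    intro x hx5 hxm
    obtain ⟨y, z, hyz, hy5, hym, hyx, hz5, hzm, hzx⟩ := pick3 5 (h 5) x
    have hρ : c3 y z 5 ∈ G := hT y z 5 hyz hy5 hz5 hym hzm (Ne.symm hm5)
    have hd : c3 (h 5) y x ∈ G :=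
      stepB G hs h012 _ _ _ (Ne.symm hym) (Ne.symm hxm) hyx hm5 hy5 hx5
    have hconj : c3 y z 5 * c3 (h 5) y x * (c3 y z 5)⁻¹ = c3 (h 5) 5 x := by
      rw [conj_c3, c3_ap1 y z 5 hyz hy5 hz5,
        c3_fix y z 5 (h 5) (Ne.symm hym) (Ne.symm hzm) hm5,
        c3_fix y z 5 x (Ne.symm hyx) (Ne.symm hzx) hx5]
    have h1 : c3 (h 5) 5 x ∈ G := hconj ▸ mul_mem (mul_mem hρ hd) (inv_mem hρ)
    have h2 : c3 5 x (h 5) ∈ G := by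
      have e1 := c3_cyclic (h 5) 5 x hm5 (Ne.symm hxm) (Ne.symm hx5)
      have e2 := c3_cyclic x (h 5) 5 hxm hx5 hm5
      rw [← e2, ← e1]
      exact h1
    refine ⟨?_, h2⟩
    have e3 := c3_inv 5 x (h 5)
    exact e3 ▸ inv_mem h2
  have h5case : ∀ q r : Fin 6, (5 : Fin 6) ≠ q → (5 : Fin 6) ≠ r → q ≠ r → c3 5 q r ∈ G := by
    intro q r h5q h5r hqr
    by_cases hqm : q = h 5
    · rw [hqm]
      exact (hcore r (Ne.symm h5r) fun e => hqr (hqm.trans e.symm)).1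
    by_cases hrm : r = h 5
    · rw [hrm]
      exact (hcore q (Ne.symm h5q) hqm).2
    · exact hT 5 q r h5q h5r hqr (Ne.symm hm5) hqm hrm
  have hall : ∀ p q r : Fin 6, p ≠ q → p ≠ r → q ≠ r → c3 p q r ∈ G := by
    intro p q r hpq hpr hqr
    by_cases hp5 : p = 5
    · rw [hp5]
      exact h5case q r (by rw [← hp5]; exact hpq) (by rw [← hp5]; exact hpr) hqr
    by_cases hq5 : q = 5
    · rw [c3_cyclic p q r hpq hpr hqr, c3_cyclic r p q (Ne.symm hpr) (Ne.symm hqr) hpq, hq5]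
      exact h5case r p (by rw [← hq5]; exact hqr) (by rw [← hq5]; exact Ne.symm hpq) (Ne.symm hpr)
    by_cases hr5 : r = 5
    · rw [c3_cyclic p q r hpq hpr hqr, hr5]
      exact h5case p q (by rw [← hr5]; exact Ne.symm hpr) (by rw [← hr5]; exact Ne.symm hqr) hpq
    · exact stepB G hs h012 p q r hpq hpr hqr hp5 hq5 hr5
  rw [← Equiv.Perm.closure_three_cycles_eq_alternating]
  refine (Subgroup.closure_le _).mpr ?_
  intro f hf
  obtain ⟨p, q, r, h1, h2, h3, rfl⟩ := threeCycle_eq f hf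
  exact hall p q r h1 h2 h3

theorem stmt13 (G : Subgroup (Equiv.Perm (Fin 6)))
    (htrans : ∀ x y : Fin 6, ∃ g ∈ G, g x = y)
    (h5 : ∃ σ ∈ G, Equiv.Perm.cycleType σ = {5})
    (h3 : ∃ τ ∈ G, Equiv.Perm.IsThreeCycle τ) :
    alternatingGroup (Fin 6) ≤ G := by
  obtain ⟨σ, hσG, hσ⟩ := h5
  obtain ⟨τ, hτG, hτ⟩ := h3
  have hconj : IsConj σ s5 := Equiv.Perm.isConj_of_cycleType_eq (by rw [hσ, s5_cycleType])
  obtain ⟨g, hg⟩ := isConj_iff.mp hconj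
  set G' : Subgroup P6 := Subgroup.map (MulAut.conj g).toMonoidHom G with hG'
  have hmem : ∀ x : P6, x ∈ G' ↔ ∃ y ∈ G, g * y * g⁻¹ = x := by
    intro x
    rw [hG', Subgroup.mem_map]
    constructor
    · rintro ⟨y, hy, hyx⟩
      exact ⟨y, hy, by simpa [MulAut.conj_apply] using hyx⟩
    · rintro ⟨y, hy, hyx⟩
      exact ⟨y, hy, by simpa [MulAut.conj_apply] using hyx⟩
  have hs' : s5 ∈ G' := (hmem s5).mpr ⟨σ, hσG, hg⟩
  have hτ' : g * τ * g⁻¹ ∈ G' := (hmem _).mpr ⟨τ, hτG, rfl⟩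
  have hτ3 : (g * τ * g⁻¹).IsThreeCycle := by
    show (g * τ * g⁻¹).cycleType = {3}
    rw [Equiv.Perm.cycleType_conj]
    exact hτ
  have htrans' : ∀ x y : Fin 6, ∃ k ∈ G', k x = y := by
    intro x y
    obtain ⟨k, hk, hkxy⟩ := htrans (g⁻¹ x) (g⁻¹ y)
    refine ⟨g * k * g⁻¹, (hmem _).mpr ⟨k, hk, rfl⟩, ?_⟩
    simp only [Equiv.Perm.mul_apply]
    rw [hkxy]
    exact g.apply_symm_apply y
  have hle := main6 G' htrans' hs' _ hτ' hτ3
  intro x hx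
  have hx' : g * x * g⁻¹ ∈ alternatingGroup (Fin 6) := by
    rw [Equiv.Perm.mem_alternatingGroup] at hx ⊢
    simp [map_mul, hx]
  obtain ⟨y, hyG, hy⟩ := (hmem _).mp (hle hx')
  have hyx : y = x := mul_left_cancel (mul_right_cancel hy)
  exact hyx ▸ hyG
end

section
/- For every n ≥ 3, the alternating group A_{n+2} on {1,...,n+2} is generated by the subgroup consisting of all even permutations fixing both n+1 and n+2 (a copy of A_n) together with the single 3-cycle (n, n+1, n+2). -/
open Equiv Equiv.Perm Subgroup

theorem stmt14 (n : ℕ) (hn : 3 ≤ n) :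
    -- letters 1,…,n+2 are represented 0-based by `Fin (n+2)`;
    -- the letters n+1 and n+2 are the indices `n` and `n+1`,
    -- and the 3-cycle (n, n+1, n+2) is the cycle on indices n-1, n, n+1.
    let a : Fin (n + 2) := ⟨n - 1, by omega⟩
    let b : Fin (n + 2) := ⟨n, by omega⟩
    let c : Fin (n + 2) := ⟨n + 1, by omega⟩
    let t : Equiv.Perm (Fin (n + 2)) := Equiv.swap a b * Equiv.swap b c
    Subgroup.closure
        ({σ | σ ∈ alternatingGroup (Fin (n + 2)) ∧ σ b = b ∧ σ c = c} ∪ {t}) =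
      alternatingGroup (Fin (n + 2)) := by
  intro a b c t
  have hab : a ≠ b := Fin.ne_of_val_ne (show n - 1 ≠ n by omega)
  have hbc : b ≠ c := Fin.ne_of_val_ne (show n ≠ n + 1 by omega)
  have hac : a ≠ c := Fin.ne_of_val_ne (show n - 1 ≠ n + 1 by omega)
  have htdef : t = Equiv.swap a b * Equiv.swap b c := rfl
  set S : Set (Equiv.Perm (Fin (n + 2))) :=
    ({σ | σ ∈ alternatingGroup (Fin (n + 2)) ∧ σ b = b ∧ σ c = c} ∪ {t}) with hS
  set H : Subgroup (Equiv.Perm (Fin (n + 2))) := Subgroup.closure S with hH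
  have ht : t ∈ H := Subgroup.subset_closure (Set.mem_union_right _ rfl)
  -- the key elements (x, b, c)
  have hu : ∀ x : Fin (n + 2), x ≠ b → x ≠ c →
      Equiv.swap x b * Equiv.swap b c ∈ H := by
    intro x hxb hxc
    by_cases hxa : x = a
    · subst hxa
      rw [← htdef]; exact ht
    have hxb' : x.val ≠ n := fun h => hxb (Fin.ext h)
    have hxc' : x.val ≠ n + 1 := fun h => hxc (Fin.ext h)
    have hxa' : x.val ≠ n - 1 := fun h => hxa (Fin.ext h)
    have hxlt : x.val < n + 2 := x.isLt
    obtain ⟨w, hwn, hwx, hwa⟩ : ∃ w : ℕ, w < n ∧ w ≠ x.val ∧ w ≠ n - 1 := by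
      by_cases h0 : x.val = 0 ∨ n - 1 = 0
      · by_cases h1 : x.val = 1 ∨ n - 1 = 1
        · exact ⟨2, by omega, by omega, by omega⟩
        · push_neg at h1
          exact ⟨1, by omega, by omega, by omega⟩
      · push_neg at h0
        exact ⟨0, by omega, by omega, by omega⟩
    set w' : Fin (n + 2) := ⟨w, by omega⟩ with hw'
    have haw : a ≠ w' := Fin.ne_of_val_ne (by show n - 1 ≠ w; omega)
    have hxw : x ≠ w' := Fin.ne_of_val_ne (by show x.val ≠ w; omega)
    have hbx : b ≠ x := fun h => hxb h.symm
    have hbw : b ≠ w' := Fin.ne_of_val_ne (by show n ≠ w; omega)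
    have hba : b ≠ a := hab.symm
    have hcx : c ≠ x := fun h => hxc h.symm
    have hcw : c ≠ w' := Fin.ne_of_val_ne (by show n + 1 ≠ w; omega)
    have hca : c ≠ a := hac.symm
    have hax : a ≠ x := fun h => hxa h.symm
    set g : Equiv.Perm (Fin (n + 2)) := Equiv.swap a x * Equiv.swap x w' with hg
    have hgb : g b = b := by
      rw [hg, Equiv.Perm.mul_apply, Equiv.swap_apply_of_ne_of_ne hbx hbw,
        Equiv.swap_apply_of_ne_of_ne hba hbx]
    have hgc : g c = c := by
      rw [hg, Equiv.Perm.mul_apply, Equiv.swap_apply_of_ne_of_ne hcx hcw,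
        Equiv.swap_apply_of_ne_of_ne hca hcx]
    have hga : g a = x := by
      rw [hg, Equiv.Perm.mul_apply, Equiv.swap_apply_of_ne_of_ne hax haw,
        Equiv.swap_apply_left]
    have hgS : g ∈ S := by
      refine Set.mem_union_left _ ⟨?_, hgb, hgc⟩
      rw [Equiv.Perm.mem_alternatingGroup, map_mul, Equiv.Perm.sign_swap hax,
        Equiv.Perm.sign_swap hxw]
      norm_num
    have hgH : g ∈ H := Subgroup.subset_closure hgS
    have key : g * t * g⁻¹ = Equiv.swap x b * Equiv.swap b c := by
      have e1 := (Equiv.swap_apply_apply g a b).symm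
      have e2 := (Equiv.swap_apply_apply g b c).symm
      calc g * t * g⁻¹ = (g * Equiv.swap a b * g⁻¹) * (g * Equiv.swap b c * g⁻¹) := by
            rw [htdef]; group
        _ = Equiv.swap (g a) (g b) * Equiv.swap (g b) (g c) := by rw [e1, e2]
        _ = Equiv.swap x b * Equiv.swap b c := by rw [hga, hgb, hgc]
    rw [← key]
    exact mul_mem (mul_mem hgH ht) (inv_mem hgH)
  -- products of an arbitrary swap with (swap b c)
  have hv : ∀ x y : Fin (n + 2), x ≠ y →
      Equiv.swap x y * Equiv.swap b c ∈ H := by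
    intro x y hxy
    by_cases hxb : x = b
    · by_cases hyc : y = c
      · rw [hxb, hyc, Equiv.swap_mul_self]
        exact one_mem _
      · have hyb : y ≠ b := fun h => hxy (hxb.trans h.symm)
        rw [hxb, Equiv.swap_comm b y]
        exact hu y hyb hyc
    · by_cases hxc : x = c
      · by_cases hyb : y = b
        · rw [hxc, hyb, Equiv.swap_comm c b, Equiv.swap_mul_self]
          exact one_mem _
        · have hyc : y ≠ c := fun h => hxy (hxc.trans h.symm)
          have key : Equiv.swap y c = Equiv.swap b c * Equiv.swap y b * (Equiv.swap b c)⁻¹ := by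
            have h1 := Equiv.swap_apply_apply (Equiv.swap b c) y b
            rwa [Equiv.swap_apply_of_ne_of_ne hyb hyc, Equiv.swap_apply_left] at h1
          rw [hxc, Equiv.swap_comm c y, key, inv_mul_cancel_right]
          have h2 := inv_mem (hu y hyb hyc)
          rwa [mul_inv_rev, Equiv.swap_inv, Equiv.swap_inv] at h2
      · by_cases hyb : y = b
        · rw [hyb]
          exact hu x hxb hxc
        · by_cases hyc : y = c
          · have key : Equiv.swap x c = Equiv.swap b c * Equiv.swap x b * (Equiv.swap b c)⁻¹ := by
              have h1 := Equiv.swap_apply_apply (Equiv.swap b c) x b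
              rwa [Equiv.swap_apply_of_ne_of_ne hxb hxc, Equiv.swap_apply_left] at h1
            rw [hyc, key, inv_mul_cancel_right]
            have h2 := inv_mem (hu x hxb hxc)
            rwa [mul_inv_rev, Equiv.swap_inv, Equiv.swap_inv] at h2
          · -- generic case: x, y ∉ {b, c}
            have h1 : Equiv.swap x y = Equiv.swap y b * Equiv.swap x b * (Equiv.swap y b)⁻¹ := by
              have h0 := Equiv.swap_apply_apply (Equiv.swap y b) x b
              rwa [Equiv.swap_apply_of_ne_of_ne hxy hxb, Equiv.swap_apply_right] at h0
            have key : Equiv.swap x y * Equiv.swap b c =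
                (Equiv.swap y b * Equiv.swap b c) * (Equiv.swap x b * Equiv.swap b c)⁻¹ *
                  (Equiv.swap y b * Equiv.swap b c) := by
              rw [h1]
              simp [mul_inv_rev, Equiv.swap_inv, mul_assoc, Equiv.swap_mul_self_mul]
            rw [key]
            exact mul_mem (mul_mem (hu y hyb hyc) (inv_mem (hu x hxb hxc))) (hu y hyb hyc)
  have hpair : ∀ σ τ : Equiv.Perm (Fin (n + 2)), σ.IsSwap → τ.IsSwap → σ * τ ∈ H := by
    rintro σ τ ⟨x, y, hxy, rfl⟩ ⟨z, w, hzw, rfl⟩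
    have key : Equiv.swap x y * Equiv.swap z w =
        (Equiv.swap x y * Equiv.swap b c) * (Equiv.swap z w * Equiv.swap b c)⁻¹ := by
      simp [mul_inv_rev, Equiv.swap_inv, mul_assoc, Equiv.swap_mul_self_mul]
    rw [key]
    exact mul_mem (hv x y hxy) (inv_mem (hv z w hzw))
  apply le_antisymm
  · rw [hH, Subgroup.closure_le]
    rintro σ (hσ | hσ)
    · exact hσ.1
    · rw [Set.mem_singleton_iff] at hσ
      subst hσ
      rw [SetLike.mem_coe, Equiv.Perm.mem_alternatingGroup, htdef, map_mul,
        Equiv.Perm.sign_swap hab, Equiv.Perm.sign_swap hbc]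
      norm_num
  · intro σ hσ
    suffices hind : ∀ (m : ℕ) (l : List (Equiv.Perm (Fin (n + 2))))
        (_ : ∀ g ∈ l, g.IsSwap) (_ : l.length = 2 * m), l.prod ∈ H by
      obtain ⟨l, rfl, hl⟩ := Equiv.Perm.truncSwapFactors σ
      obtain ⟨m, hm⟩ := (Equiv.Perm.prod_list_swap_mem_alternatingGroup_iff_even_length hl).1 hσ
      rw [← two_mul] at hm
      exact hind m l hl hm
    intro m
    induction m with
    | zero =>
      intro l _ hn'
      simp only [Nat.mul_zero, List.length_eq_zero_iff] at hn'
      simp [hn', one_mem]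
    | succ m ih =>
      intro l hl hn'
      rw [Nat.mul_succ] at hn'
      obtain ⟨σ₁, l, rfl⟩ := l.exists_of_length_succ hn'
      rw [List.length_cons, Nat.succ_inj] at hn'
      obtain ⟨σ₂, l, rfl⟩ := l.exists_of_length_succ hn'
      rw [List.length_cons, Nat.succ_inj] at hn'
      rw [List.prod_cons, List.prod_cons, ← mul_assoc]
      exact mul_mem
        (hpair _ _ (hl σ₁ (List.mem_cons_self))
          (hl σ₂ (List.mem_cons_of_mem σ₁ (List.mem_cons_self))))
        (ih _ (fun g hg => hl g (List.mem_cons_of_mem _ (List.mem_cons_of_mem _ hg))) hn')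
end

section
/- Let (g₁, g₂, g₃) and (h₁, h₂, h₃) be two triples of 3-cycles in the alternating group A₄ on {1,2,3,4} such that g₁g₂g₃ = 1 = h₁h₂h₃ and such that each triple generates A₄. Then there exists a permutation σ ∈ S₄ with σ·gᵢ·σ⁻¹ = hᵢ for i = 1, 2, 3. -/
/-!
Call a pair `(a, b)` of 3-cycles of `Fin 4` admissible if `a * b` is again a 3-cycle and `b ≠ a`;
the triple `(g 0, g 1, g 2)` is determined by the admissible pair `(g 0, g 1)`, because
`g 2 = (g 0 * g 1)⁻¹`, and `g 1 = g 0` would put the triple inside the cyclic group `⟨g 0⟩` of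
order 3, which is not `A₄`. All 3-cycles are conjugate
in `S₄`, so after conjugation `a` is a fixed 3-cycle `a₀`; the three admissible partners of `a₀`
are permuted transitively by the powers of `a₀`, which is a finite check. Hence every admissible
pair is conjugate to one normal form `(a₀, b₀)`.
-/

open Equiv Equiv.Perm Subgroup

namespace Equiv.Perm.IsThreeCycle

variable {α : Type*} [Fintype α] [DecidableEq α]

theorem pow_three_eq_one {σ : Perm α} (h : σ.IsThreeCycle) : σ ^ 3 = 1 :=
  h.orderOf ▸ pow_orderOf_eq_one σ

theorem conj_iff {σ τ : Perm α} : (σ * τ * σ⁻¹).IsThreeCycle ↔ τ.IsThreeCycle := by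
  rw [IsThreeCycle, IsThreeCycle, cycleType_conj]

theorem exists_conj_eq {σ τ : Perm α} (hσ : σ.IsThreeCycle) (hτ : τ.IsThreeCycle) :
    ∃ ρ : Perm α, ρ * σ * ρ⁻¹ = τ :=
  isConj_iff.mp (isConj_iff_cycleType_eq.mpr (hσ.trans hτ.symm))

end Equiv.Perm.IsThreeCycle

namespace Fin4

def a₀ : Perm (Fin 4) := swap 0 1 * swap 0 2

-- `b₀ = (0 1 3)` is one of the three admissible partners of `a₀ = (0 2 1)`.
def b₀ : Perm (Fin 4) := swap 0 3 * swap 0 1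

theorem isThreeCycle_a₀ : a₀.IsThreeCycle :=
  isThreeCycle_swap_mul_swap_same (by decide) (by decide) (by decide)

theorem exists_conj_fixing_a₀_of_pow_three_eq_one :
    ∀ b : Perm (Fin 4), b ^ 3 = 1 → b ≠ 1 → (a₀ * b) ^ 3 = 1 → a₀ * b ≠ 1 → b ≠ a₀ →
      ∃ τ : Perm (Fin 4), τ * a₀ * τ⁻¹ = a₀ ∧ τ * b₀ * τ⁻¹ = b := by
  decide

theorem exists_conj_fixing_a₀ {b : Perm (Fin 4)} (hb : b.IsThreeCycle)
    (hab : (a₀ * b).IsThreeCycle) (hne : b ≠ a₀) :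
    ∃ τ : Perm (Fin 4), τ * a₀ * τ⁻¹ = a₀ ∧ τ * b₀ * τ⁻¹ = b :=
  exists_conj_fixing_a₀_of_pow_three_eq_one b hb.pow_three_eq_one hb.ne_one
    hab.pow_three_eq_one hab.ne_one hne

theorem exists_conj_eq_normal_form {a b : Perm (Fin 4)} (ha : a.IsThreeCycle)
    (hb : b.IsThreeCycle) (hab : (a * b).IsThreeCycle) (hne : b ≠ a) :
    ∃ σ : Perm (Fin 4), σ * a₀ * σ⁻¹ = a ∧ σ * b₀ * σ⁻¹ = b := by
  obtain ⟨ρ, rfl⟩ := isThreeCycle_a₀.exists_conj_eq ha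
  obtain ⟨b', rfl⟩ : ∃ b', ρ * b' * ρ⁻¹ = b := ⟨ρ⁻¹ * b * ρ, by group⟩
  have hconj : ρ * a₀ * ρ⁻¹ * (ρ * b' * ρ⁻¹) = ρ * (a₀ * b') * ρ⁻¹ := by group
  rw [IsThreeCycle.conj_iff] at hb
  rw [hconj, IsThreeCycle.conj_iff] at hab
  obtain ⟨τ, hτa, hτb⟩ := exists_conj_fixing_a₀ hb hab (by rintro rfl; exact hne rfl)
  refine ⟨ρ * τ, ?_, ?_⟩
  · rw [show ρ * τ * a₀ * (ρ * τ)⁻¹ = ρ * (τ * a₀ * τ⁻¹) * ρ⁻¹ by group, hτa]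
  · rw [show ρ * τ * b₀ * (ρ * τ)⁻¹ = ρ * (τ * b₀ * τ⁻¹) * ρ⁻¹ by group, hτb]

theorem exists_conj_eq_pair {a b a' b' : Perm (Fin 4)}
    (ha : a.IsThreeCycle) (hb : b.IsThreeCycle) (hab : (a * b).IsThreeCycle) (hne : b ≠ a)
    (ha' : a'.IsThreeCycle) (hb' : b'.IsThreeCycle) (hab' : (a' * b').IsThreeCycle)
    (hne' : b' ≠ a') :
    ∃ σ : Perm (Fin 4), σ * a * σ⁻¹ = a' ∧ σ * b * σ⁻¹ = b' := by
  obtain ⟨σ, rfl, rfl⟩ := exists_conj_eq_normal_form ha hb hab hne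
  obtain ⟨σ', rfl, rfl⟩ := exists_conj_eq_normal_form ha' hb' hab' hne'
  exact ⟨σ' * σ⁻¹, by group, by group⟩

theorem ne_of_closure_eq_alternatingGroup {a b : Perm (Fin 4)} (ha : a.IsThreeCycle)
    (h : closure {a, b, (a * b)⁻¹} = alternatingGroup (Fin 4)) : b ≠ a := by
  rintro rfl
  have hle : alternatingGroup (Fin 4) ≤ zpowers b := by
    rw [← h, closure_le]
    rintro x (rfl | rfl | rfl)
    · exact mem_zpowers x
    · exact mem_zpowers x
    · exact inv_mem (mul_mem (mem_zpowers b) (mem_zpowers b))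
  have hcard := card_le_of_le hle
  rw [Nat.card_zpowers, ha.orderOf, nat_card_alternatingGroup] at hcard
  simp [Nat.factorial] at hcard

end Fin4

open Fin4 in
theorem stmt17 (g h : Fin 3 → Equiv.Perm (Fin 4))
    (hg3 : ∀ i, (g i).IsThreeCycle) (hh3 : ∀ i, (h i).IsThreeCycle)
    (hgprod : g 0 * g 1 * g 2 = 1) (hhprod : h 0 * h 1 * h 2 = 1)
    (hggen : Subgroup.closure {g 0, g 1, g 2} = alternatingGroup (Fin 4))
    (hhgen : Subgroup.closure {h 0, h 1, h 2} = alternatingGroup (Fin 4)) :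
    ∃ σ : Equiv.Perm (Fin 4), ∀ i, σ * g i * σ⁻¹ = h i := by
  have hg2 : g 2 = (g 0 * g 1)⁻¹ := eq_inv_of_mul_eq_one_right hgprod
  have hh2 : h 2 = (h 0 * h 1)⁻¹ := eq_inv_of_mul_eq_one_right hhprod
  rw [hg2] at hggen
  rw [hh2] at hhgen
  obtain ⟨σ, h0, h1⟩ := exists_conj_eq_pair (hg3 0) (hg3 1)
    (IsThreeCycle.inv_iff.mp (hg2 ▸ hg3 2)) (ne_of_closure_eq_alternatingGroup (hg3 0) hggen)
    (hh3 0) (hh3 1)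
    (IsThreeCycle.inv_iff.mp (hh2 ▸ hh3 2)) (ne_of_closure_eq_alternatingGroup (hh3 0) hhgen)
  refine ⟨σ, fun i => ?_⟩
  fin_cases i
  · exact h0
  · exact h1
  · change σ * g 2 * σ⁻¹ = h 2
    rw [hg2, hh2, ← h0, ← h1]
    group
end
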